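/- arXiv:math/0304091 — 4 statements merged into one kernel-verified Lean document; each statement's English description precedes it below -/
import Mathlib

section
/- For a random walk in an iid random environment on a countable abelian group G, the annealed one-step transition probability given the past depends only on the unordered history of the current site: P^μ-almost everywhere on the event {X_n = x}, P^μ(X_{n+1} = x + e | F_n) = E[ν_e ∏_{g∈G} ν_g^{N_g(n,x)}] / E[∏_{g∈G} ν_g^{N_g(n,x)}], where N_g(n,x) is the number of jumps from x to x+g before time n. -/
open MeasureTheory ProbabilityTheory Filter

/-- Number of jumps of size `g` from site `x` made by the walk `X` before time `n`. -/
def jumpCount {G Ω : Type*} [AddCommGroup G] [DecidableEq G]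
    (X : ℕ → Ω → G) (g x : G) (n : ℕ) (ω : Ω) : ℕ :=
  ((Finset.range n).filter (fun l => X l ω = x ∧ X (l + 1) ω = X l ω + g)).card

/-- The ordered history of site `x` at time `n`: the successive jumps made from `x`. -/
def orderedHistory {G Ω : Type*} [AddCommGroup G] [DecidableEq G]
    (X : ℕ → Ω → G) (x : G) (n : ℕ) (ω : Ω) : List G :=
  ((List.range n).filter (fun l => decide (X l ω = x))).map (fun l => X (l + 1) ω - X l ω)

/-- The σ-algebra generated by the whole environment. -/
def envSigma {G Ω : Type*} [mΩ : MeasurableSpace Ω] (ν : G → G → Ω → ℝ) : MeasurableSpace Ω :=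
  ⨆ x : G, MeasurableSpace.comap (fun ω (e : G) => ν x e ω) inferInstance

/-- The natural filtration of the walk `X`. -/
def natFilt {G Ω : Type*} [MeasurableSpace G] [mΩ : MeasurableSpace Ω]
    (X : ℕ → Ω → G) (n : ℕ) : MeasurableSpace Ω :=
  ⨆ i ∈ Set.Iic n, MeasurableSpace.comap (X i) inferInstance

/-- `X` is a random walk in an iid random environment `ν` (with one-site marginal law μ),
under the annealed law `P`. -/
structure IsRWRE {G Ω : Type*} [AddCommGroup G] [Countable G] [MeasurableSpace G]
    [MeasurableSingletonClass G] [DecidableEq G] [mΩ : MeasurableSpace Ω]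
    (P : Measure Ω) (ν : G → G → Ω → ℝ) (X : ℕ → Ω → G) : Prop where
  meas_nu : ∀ x e, Measurable (ν x e)
  nonneg : ∀ x e ω, 0 ≤ ν x e ω
  sum_one : ∀ x ω, HasSum (fun e => ν x e ω) 1
  meas_X : ∀ n, Measurable (X n)
  start : ∀ ω, X 0 ω = 0
  indep_sites : iIndepFun (m := fun _ : G => (inferInstance : MeasurableSpace (G → ℝ)))
    (fun x ω e => ν x e ω) P
  ident_sites : ∀ x : G,
    Measure.map (fun ω (e : G) => ν x e ω) P = Measure.map (fun ω (e : G) => ν 0 e ω) P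
  quenched : ∀ n (x e : G), ∀ᵐ ω ∂P, X n ω = x →
    (P[Set.indicator {ω' | X (n + 1) ω' = x + e} (fun _ => (1 : ℝ)) |
        envSigma ν ⊔ natFilt X n]) ω = ν x e ω

/-- The moment `E[∏_g ν_g^{n_g}]` of the one-site environment. -/
noncomputable def envMoment {G Ω : Type*} [AddCommGroup G] [mΩ : MeasurableSpace Ω]
    (P : Measure Ω) (ν : G → G → Ω → ℝ) (nv : G → ℕ) : ℝ :=
  ∫ ω, (∏ᶠ g : G, ν 0 g ω ^ nv g) ∂P

/-- The moment `E[ν_e ∏_g ν_g^{n_g}]` of the one-site environment. -/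
noncomputable def envMoment1 {G Ω : Type*} [AddCommGroup G] [mΩ : MeasurableSpace Ω]
    (P : Measure Ω) (ν : G → G → Ω → ℝ) (nv : G → ℕ) (e : G) : ℝ :=
  ∫ ω, (ν 0 e ω * ∏ᶠ g : G, ν 0 g ω ^ nv g) ∂P

/-- The set `E` of possible jumps. -/
def Ejumps {G Ω : Type*} [AddCommGroup G] [mΩ : MeasurableSpace Ω] (P : Measure Ω) (ν : G → G → Ω → ℝ) :
    Set G :=
  {g | 0 < P {ω | 0 < ν 0 g ω}}

/-- The set `R ⊆ E` of returnable jumps. -/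
def Rset {G Ω : Type*} [AddCommGroup G] [mΩ : MeasurableSpace Ω]
    (P : Measure Ω) (ν : G → G → Ω → ℝ) : Set G :=
  {r ∈ Ejumps P ν | ∃ l : List G, l ≠ [] ∧ (∀ e ∈ l, e ∈ Ejumps P ν) ∧ r = -l.sum}

/-- The set of possible unordered histories. -/
def Nposs {G Ω : Type*} [AddCommGroup G] [mΩ : MeasurableSpace Ω]
    (P : Measure Ω) (ν : G → G → Ω → ℝ) : Set (G → ℕ) :=
  {nv | (Function.support nv).Finite ∧ (∀ g, nv g ≠ 0 → g ∈ Rset P ν) ∧ 0 < envMoment P ν nv}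

/-- `X` is an edge-oriented reinforced random walk with reinforcement function `V` under `P`. -/
structure IsRRW {G Ω : Type*} [AddCommGroup G] [MeasurableSpace G]
    [MeasurableSingletonClass G] [DecidableEq G] [mΩ : MeasurableSpace Ω]
    (P : Measure Ω) (V : (G → ℕ) → G → ℝ) (X : ℕ → Ω → G) : Prop where
  meas_X : ∀ n, Measurable (X n)
  start : ∀ ω, X 0 ω = 0
  step : ∀ n (e : G), ∀ᵐ ω ∂P,
    (P[Set.indicator {ω' | X (n + 1) ω' = X n ω' + e} (fun _ => (1 : ℝ)) | natFilt X n]) ω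
      = V (fun g => jumpCount X g (X n ω) n ω) e

/-- The unordered history of the site currently occupied by `X` at time `n`. -/
def localHist {G Ω : Type*} [AddCommGroup G] [DecidableEq G]
    (X : ℕ → Ω → G) (n : ℕ) (ω : Ω) : G → ℕ :=
  fun g => jumpCount X g (X n ω) n ω

/-- `τ(n)`: the number of times `j ≤ n` at which the local unordered history coincides with the
one at time `n`. -/
noncomputable def tauCount {G Ω : Type*} [AddCommGroup G] [DecidableEq G]
    (X : ℕ → Ω → G) (n : ℕ) (ω : Ω) : ℕ :=
  Nat.card {j : ℕ // j ≤ n ∧ localHist X j ω = localHist X n ω}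

/-- `Δ_i^{n⃗}`: the jump performed at the `i`-th time at which the local unordered history
equals `nv` (the times being given by `T`). -/
def Delta {G Ω : Type*} [AddCommGroup G] [DecidableEq G]
    (X : ℕ → Ω → G) (T : (G → ℕ) → ℕ → Ω → ℕ) (nv : G → ℕ) (i : ℕ) (ω : Ω) : G :=
  X (T nv i ω + 1) ω - X (T nv i ω) ω

/-- `T nv i` enumerates (strictly increasingly, and exhaustively) the successive times at which
the local unordered history of `X` equals `nv`, for each possible history `nv ∈ N_poss`. -/
def EnumTimes {G Ω : Type*} [AddCommGroup G] [DecidableEq G] [mΩ : MeasurableSpace Ω]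
    (P : Measure Ω) (ν : G → G → Ω → ℝ) (X : ℕ → Ω → G)
    (T : (G → ℕ) → ℕ → Ω → ℕ) : Prop :=
  ∀ nv ∈ Nposs P ν, ∀ᵐ ω ∂P,
    StrictMono (fun i => T nv i ω) ∧ (∀ i, localHist X (T nv i ω) ω = nv) ∧
    (∀ k, localHist X k ω = nv → ∃ i, T nv i ω = k)

/-- `V` is given on possible histories by the ratio-of-moments formula. -/
def Vformula {G Ω : Type*} [AddCommGroup G] [mΩ : MeasurableSpace Ω]
    (P : Measure Ω) (ν : G → G → Ω → ℝ) (V : (G → ℕ) → G → ℝ) : Prop :=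
  ∀ nv ∈ Nposs P ν, ∀ e, V nv e = envMoment1 P ν nv e / envMoment P ν nv

set_option linter.unusedSectionVars false
set_option linter.unusedVariables false

namespace RWREAux

variable {G Ω : Type*} [AddCommGroup G] [Countable G] [MeasurableSpace G]
  [MeasurableSingletonClass G] [DecidableEq G] [mΩ : MeasurableSpace Ω]

/-- The set of trajectories agreeing with `p` up to time `n`. -/
def pathSet (X : ℕ → Ω → G) (p : ℕ → G) (n : ℕ) : Set Ω := {ω | ∀ i ≤ n, X i ω = p i}

/-- The number of `l < n` with `p l = y` and jump `g`. -/
def cnt (p : ℕ → G) (n : ℕ) (y g : G) : ℕ :=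
  ((Finset.range n).filter (fun l => p l = y ∧ p (l + 1) = p l + g)).card

/-- The initial segment of the walk, as a single random vector. -/
def vec (X : ℕ → Ω → G) (n : ℕ) (ω : Ω) : Fin (n + 1) → G := fun i => X i ω

variable {P : Measure Ω} {ν : G → G → Ω → ℝ} {X : ℕ → Ω → G}

section Basic

theorem natFilt_le (hX : ∀ n, Measurable (X n)) (n : ℕ) : natFilt X n ≤ mΩ :=
  iSup₂_le fun i _ => (hX i).comap_le

theorem envSigma_le (hν : ∀ x e, Measurable (ν x e)) : envSigma ν ≤ mΩ :=
  iSup_le fun x => (measurable_pi_lambda _ (fun e => hν x e)).comap_le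

theorem measurable_nu_env (x e : G) : Measurable[envSigma ν] (ν x e) := by
  have h0 : Measurable[MeasurableSpace.comap (fun ω (e : G) => ν x e ω) inferInstance]
      (fun ω (e : G) => ν x e ω) := comap_measurable _
  have h1 : Measurable[MeasurableSpace.comap (fun ω (e : G) => ν x e ω) inferInstance] (ν x e) :=
    (measurable_pi_apply e).comp h0
  exact h1.mono (le_iSup (fun x => MeasurableSpace.comap (fun ω (e : G) => ν x e ω) inferInstance) x) le_rfl

theorem pathSet_measurableSet (p : ℕ → G) (n : ℕ) :
    MeasurableSet[natFilt X n] (pathSet X p n) := by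
  have : pathSet X p n = ⋂ i ∈ Set.Iic n, X i ⁻¹' {p i} := by
    ext ω; simp [pathSet, Set.mem_iInter]
  rw [this]
  refine MeasurableSet.biInter (Set.to_countable _) fun i hi => ?_
  have h1 : MeasurableSet[MeasurableSpace.comap (X i) inferInstance] (X i ⁻¹' {p i}) :=
    ⟨{p i}, measurableSet_singleton _, rfl⟩
  exact (le_iSup₂ (f := fun i (_ : i ∈ Set.Iic n) => MeasurableSpace.comap (X i) inferInstance) i hi) _ h1

theorem pathSet_congr {p q : ℕ → G} {n : ℕ} (h : ∀ i ≤ n, p i = q i) :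
    pathSet X p n = pathSet X q n := by
  ext ω; exact forall₂_congr fun i hi => by rw [h i hi]

theorem measurable_vec (hX : ∀ n, Measurable (X n)) (n : ℕ) : Measurable (vec X n) :=
  measurable_pi_lambda _ fun i => hX i

theorem pathSet_eq_fiber (n : ℕ) (ω : Ω) :
    pathSet X (fun i => X i ω) n = vec X n ⁻¹' {vec X n ω} := by
  ext ω'
  simp only [pathSet, Set.mem_setOf_eq, Set.mem_preimage, Set.mem_singleton_iff, funext_iff, vec]
  constructor
  · intro h i; exact h i (Nat.lt_succ_iff.mp i.2)
  · intro h i hi; exact h ⟨i, Nat.lt_succ_of_le hi⟩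

theorem comap_vec_le (n : ℕ) :
    MeasurableSpace.comap (vec X n) inferInstance ≤ natFilt X n := by
  rw [show (inferInstance : MeasurableSpace (Fin (n+1) → G)) = MeasurableSpace.pi from rfl,
    MeasurableSpace.pi, MeasurableSpace.comap_iSup]
  refine iSup_le fun i => ?_
  rw [MeasurableSpace.comap_comp]
  exact le_iSup₂ (f := fun j (_ : j ∈ Set.Iic n) => MeasurableSpace.comap (X j) inferInstance)
    (i : ℕ) (Nat.lt_succ_iff.mp i.2)

theorem natFilt_le_comap_vec (n : ℕ) :
    natFilt X n ≤ MeasurableSpace.comap (vec X n) ⊤ := by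
  refine iSup₂_le fun i hi => ?_
  have : MeasurableSpace.comap (X i) inferInstance
      = MeasurableSpace.comap (vec X n) (MeasurableSpace.comap
          (fun f : Fin (n+1) → G => f ⟨i, Nat.lt_succ_of_le hi⟩) inferInstance) := by
    rw [MeasurableSpace.comap_comp]; rfl
  rw [this]
  exact MeasurableSpace.comap_mono le_top

theorem exists_preimage_of_natFilt {n : ℕ} {s : Set Ω} (hs : MeasurableSet[natFilt X n] s) :
    ∃ S : Set (Fin (n+1) → G), vec X n ⁻¹' S = s := by
  obtain ⟨S, -, hS⟩ := natFilt_le_comap_vec n s hs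
  exact ⟨S, hS⟩

end Basic

section Condexp

variable [IsProbabilityMeasure P]

/-- Average of `f` over the atom indexed by `b`. -/
noncomputable def atomAvg (P : Measure Ω) (X : ℕ → Ω → G) (n : ℕ) (f : Ω → ℝ)
    (b : Fin (n + 1) → G) : ℝ :=
  (∫ a in vec X n ⁻¹' {b}, f a ∂P) / (P (vec X n ⁻¹' {b})).toReal

theorem abs_atomAvg_le {n : ℕ} {f : Ω → ℝ} (hfm : Measurable f) (hf1 : ∀ ω, ‖f ω‖ ≤ 1)
    (b : Fin (n + 1) → G) :
    ‖atomAvg P X n f b‖ ≤ 1 := by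
  rcases eq_or_ne ((P (vec X n ⁻¹' {b})).toReal) 0 with h0 | h0
  · simp [atomAvg, h0]
  · have hfin : P (vec X n ⁻¹' {b}) < ⊤ := measure_lt_top _ _
    have hb : ‖∫ a in vec X n ⁻¹' {b}, f a ∂P‖ ≤ 1 * (P (vec X n ⁻¹' {b})).toReal :=
      norm_setIntegral_le_of_norm_le_const hfin (fun x _ => hf1 x)
    rw [atomAvg, norm_div, Real.norm_eq_abs (((P (vec X n ⁻¹' {b})).toReal)),
      abs_of_nonneg ENNReal.toReal_nonneg, div_le_one (lt_of_le_of_ne ENNReal.toReal_nonneg (Ne.symm h0))]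
    simpa using hb

theorem norm_le_one_of_mem_Icc {f : Ω → ℝ} (hf0 : ∀ ω, 0 ≤ f ω) (hf1 : ∀ ω, f ω ≤ 1) (ω : Ω) :
    ‖f ω‖ ≤ 1 := by rw [Real.norm_eq_abs, abs_of_nonneg (hf0 ω)]; exact hf1 ω

theorem integrable_of_le_one {f : Ω → ℝ} (hfm : Measurable f) (hf1 : ∀ ω, ‖f ω‖ ≤ 1) :
    Integrable f P :=
  Integrable.mono' (integrable_const 1) hfm.aestronglyMeasurable (ae_of_all _ hf1)

theorem measurable_atomAvg_comp (hX : ∀ n, Measurable (X n)) (n : ℕ) (f : Ω → ℝ) :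
    Measurable[natFilt X n] (fun ω => atomAvg P X n f (vec X n ω)) := by
  have h1 : Measurable[MeasurableSpace.comap (vec X n) inferInstance] (vec X n) :=
    comap_measurable _
  exact ((measurable_of_countable (atomAvg P X n f)).comp h1).mono (comap_vec_le n) le_rfl

theorem condexp_natFilt_ae (hX : ∀ n, Measurable (X n)) (n : ℕ)
    {f : Ω → ℝ} (hfm : Measurable f) (hf0 : ∀ ω, 0 ≤ f ω) (hf1 : ∀ ω, f ω ≤ 1) :
    ∀ᵐ ω ∂P, (P[f | natFilt X n]) ω = atomAvg P X n f (vec X n ω) := by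
  have hm : natFilt X n ≤ mΩ := natFilt_le hX n
  have hfnorm : ∀ ω, ‖f ω‖ ≤ 1 := norm_le_one_of_mem_Icc hf0 hf1
  have hf_int : Integrable f P := integrable_of_le_one hfm hfnorm
  set g : Ω → ℝ := fun ω => atomAvg P X n f (vec X n ω) with hg_def
  have hgmeas : Measurable[natFilt X n] g := measurable_atomAvg_comp hX n f
  have hg_int : Integrable g P :=
    integrable_of_le_one (hgmeas.mono hm le_rfl) (fun ω => abs_atomAvg_le hfm hfnorm _)
  have hatom_meas : ∀ b : Fin (n+1) → G, MeasurableSet (vec X n ⁻¹' {b}) :=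
    fun b => measurable_vec hX n (measurableSet_singleton _)
  have key : ∀ b : Fin (n+1) → G,
      ∫ a in vec X n ⁻¹' {b}, g a ∂P = ∫ a in vec X n ⁻¹' {b}, f a ∂P := by
    intro b
    have hconst : ∀ a ∈ vec X n ⁻¹' {b}, g a = atomAvg P X n f b := by
      intro a ha; simp only [hg_def]; rw [Set.mem_preimage, Set.mem_singleton_iff] at ha; rw [ha]
    rw [setIntegral_congr_fun (hatom_meas b) hconst, setIntegral_const, smul_eq_mul]
    rcases eq_or_ne (P (vec X n ⁻¹' {b})) 0 with h0 | h0
    · rw [measureReal_def, h0]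
      simp [Measure.restrict_eq_zero.mpr h0]
    · have htr : (P (vec X n ⁻¹' {b})).toReal ≠ 0 :=
        ENNReal.toReal_ne_zero.mpr ⟨h0, measure_ne_top _ _⟩
      rw [atomAvg, measureReal_def, mul_div_cancel₀ _ htr]
  have heq : g =ᵐ[P] P[f | natFilt X n] := by
    refine ae_eq_condExp_of_forall_setIntegral_eq hm hf_int
      (fun s _ _ => hg_int.integrableOn) (fun s hs _ => ?_)
      ((hgmeas.stronglyMeasurable).aestronglyMeasurable)
    obtain ⟨S, rfl⟩ := exists_preimage_of_natFilt hs
    have hdecomp : vec X n ⁻¹' S = ⋃ b : S, vec X n ⁻¹' {(b : Fin (n+1) → G)} := by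
      ext a; simp [Set.mem_iUnion]
    have hd : Pairwise (Function.onFun Disjoint fun b : S => vec X n ⁻¹' {(b : Fin (n+1) → G)}) := by
      intro b c hbc
      exact Disjoint.preimage _ (by simpa [Set.disjoint_singleton] using Subtype.coe_injective.ne hbc)
    rw [hdecomp, integral_iUnion (fun b => hatom_meas _) hd hg_int.integrableOn,
      integral_iUnion (fun b => hatom_meas _) hd hf_int.integrableOn]
    exact tsum_congr fun b => key _
  filter_upwards [heq] with ω hω using hω.symm

theorem ae_atom_pos (hX : ∀ n, Measurable (X n)) (n : ℕ) :
    ∀ᵐ ω ∂P, P (vec X n ⁻¹' {vec X n ω}) ≠ 0 := by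
  have hsub : {ω | P (vec X n ⁻¹' {vec X n ω}) = 0}
      ⊆ ⋃ b : {b : Fin (n+1) → G | P (vec X n ⁻¹' {b}) = 0}, vec X n ⁻¹' {(b : Fin (n+1) → G)} :=
    fun ω hω => Set.mem_iUnion.mpr ⟨⟨vec X n ω, hω⟩, rfl⟩
  have h0 : P (⋃ b : {b : Fin (n+1) → G | P (vec X n ⁻¹' {b}) = 0},
      vec X n ⁻¹' {(b : Fin (n+1) → G)}) = 0 := measure_iUnion_null fun b => b.2
  rw [ae_iff]
  simpa using measure_mono_null hsub h0

end Condexp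

section PathIntegral

variable [IsProbabilityMeasure P]

theorem nu_le_one (h : IsRWRE P ν X) (x e : G) (ω : Ω) : ν x e ω ≤ 1 :=
  le_hasSum (h.sum_one x ω) e fun j _ => h.nonneg x j ω

theorem pathSet_integral (h : IsRWRE P ν X) (n : ℕ) (p : ℕ → G) (hp0 : p 0 = 0)
    (hfun : Ω → ℝ) (hfm : Measurable[envSigma ν] hfun) (hf0 : ∀ ω, 0 ≤ hfun ω)
    (hf1 : ∀ ω, hfun ω ≤ 1) :
    ∫ a in pathSet X p n, hfun a ∂P
      = ∫ a, hfun a * ∏ l ∈ Finset.range n, ν (p l) (p (l + 1) - p l) a ∂P := by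
  induction n generalizing hfun with
  | zero =>
    have huniv : pathSet X p 0 = Set.univ := by
      ext ω
      simp only [pathSet, Set.mem_setOf_eq, Set.mem_univ, iff_true, Nat.le_zero]
      rintro i rfl
      rw [h.start ω, hp0]
    rw [huniv, setIntegral_univ]
    simp
  | succ n ih =>
    set e : G := p (n + 1) - p n with he_def
    have hpe : p n + e = p (n + 1) := by rw [he_def]; abel
    set B : Set Ω := {ω' | X (n + 1) ω' = p n + e} with hB_def
    have hBpre : B = X (n + 1) ⁻¹' {p (n + 1)} := by
      ext a; simp [hB_def, hpe]
    have hBmeas : MeasurableSet B := by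
      rw [hBpre]; exact h.meas_X (n + 1) (measurableSet_singleton _)
    have hsplit : pathSet X p (n + 1) = pathSet X p n ∩ B := by
      rw [hBpre]
      ext ω
      simp only [pathSet, Set.mem_setOf_eq, Set.mem_inter_iff, Set.mem_preimage,
        Set.mem_singleton_iff]
      constructor
      · exact fun hh => ⟨fun i hi => hh i (hi.trans (Nat.le_succ n)), hh (n + 1) le_rfl⟩
      · rintro ⟨h1, h2⟩ i hi
        rcases Nat.le_succ_iff.mp hi with hi' | rfl
        · exact h1 i hi'
        · exact h2
    set ind : Ω → ℝ := Set.indicator B (fun _ => (1 : ℝ)) with hind_def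
    have hm' : envSigma ν ⊔ natFilt X n ≤ mΩ :=
      sup_le (envSigma_le h.meas_nu) (natFilt_le h.meas_X n)
    have hA : MeasurableSet[natFilt X n] (pathSet X p n) := pathSet_measurableSet p n
    have hAm : MeasurableSet (pathSet X p n) := natFilt_le h.meas_X n _ hA
    have hfun_meas : Measurable hfun := hfm.mono (envSigma_le h.meas_nu) le_rfl
    have hind_int : Integrable ind P := (integrable_const (1 : ℝ)).indicator hBmeas
    have hprod_int : Integrable (hfun * ind) P := by
      refine integrable_of_le_one (hfun_meas.mul (measurable_const.indicator hBmeas)) fun ω => ?_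
      rw [Real.norm_eq_abs, Pi.mul_apply, abs_mul]
      have h1 : |hfun ω| ≤ 1 := by rw [abs_of_nonneg (hf0 ω)]; exact hf1 ω
      have h2 : |ind ω| ≤ 1 := by
        rw [hind_def]
        by_cases hω : ω ∈ B <;> simp [Set.indicator_of_mem, Set.indicator_of_notMem, hω]
      calc |hfun ω| * |ind ω| ≤ 1 * 1 := by
            exact mul_le_mul h1 h2 (abs_nonneg _) zero_le_one
        _ = 1 := mul_one 1
    -- step 1 : restrict to the smaller path set with an indicator
    have step1 : ∫ a in pathSet X p (n + 1), hfun a ∂P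
        = ∫ a in pathSet X p n, (hfun * ind) a ∂P := by
      rw [hsplit, ← setIntegral_indicator hBmeas]
      refine setIntegral_congr_fun hAm fun a _ => ?_
      by_cases ha : a ∈ B <;>
        simp [Set.indicator_of_mem, Set.indicator_of_notMem, ha, hind_def]
    -- step 2 : replace by conditional expectation
    have step2 : ∫ a in pathSet X p n, (hfun * ind) a ∂P
        = ∫ a in pathSet X p n, (P[hfun * ind | envSigma ν ⊔ natFilt X n]) a ∂P :=
      (setIntegral_condExp hm' hprod_int ((le_sup_right : natFilt X n ≤ envSigma ν ⊔ natFilt X n) _ hA)).symm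
    -- step 3 : pull-out and quenched identity
    have hpull : P[hfun * ind | envSigma ν ⊔ natFilt X n]
        =ᵐ[P] hfun * P[ind | envSigma ν ⊔ natFilt X n] := by
      refine condExp_stronglyMeasurable_mul_of_bound hm'
        ((hfm.mono (le_sup_left : envSigma ν ≤ envSigma ν ⊔ natFilt X n) le_rfl).stronglyMeasurable) hind_int 1 ?_
      exact ae_of_all _ (norm_le_one_of_mem_Icc hf0 hf1)
    have hq := h.quenched n (p n) e
    have step3 : ∫ a in pathSet X p n, (P[hfun * ind | envSigma ν ⊔ natFilt X n]) a ∂P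
        = ∫ a in pathSet X p n, hfun a * ν (p n) e a ∂P := by
      refine setIntegral_congr_ae hAm ?_
      filter_upwards [hpull, hq] with ω h1 h2 hω
      have hXn : X n ω = p n := hω n le_rfl
      rw [h1, Pi.mul_apply, h2 hXn]
    -- step 4 : induction hypothesis with the new density
    have hnew_meas : Measurable[envSigma ν] (fun a => hfun a * ν (p n) e a) :=
      hfm.mul (measurable_nu_env (p n) e)
    have hnew0 : ∀ ω, 0 ≤ hfun ω * ν (p n) e ω :=
      fun ω => mul_nonneg (hf0 ω) (h.nonneg _ _ ω)
    have hnew1 : ∀ ω, hfun ω * ν (p n) e ω ≤ 1 := fun ω =>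
      mul_le_one₀ (hf1 ω) (h.nonneg _ _ ω) (nu_le_one h _ _ ω)
    have step4 := ih (fun a => hfun a * ν (p n) e a) hnew_meas hnew0 hnew1
    rw [step1, step2, step3, step4]
    congr 1
    funext a
    rw [Finset.prod_range_succ]
    ring

end PathIntegral

section Product

variable [IsProbabilityMeasure P]

theorem cnt_support_subset {p : ℕ → G} {n : ℕ} {y g : G} (hg : cnt p n y g ≠ 0) :
    g ∈ (Finset.range n).image (fun l => p (l + 1) - p l) := by
  rw [cnt] at hg
  obtain ⟨l, hl⟩ := Finset.card_pos.mp (Nat.pos_of_ne_zero hg)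
  rw [Finset.mem_filter] at hl
  exact Finset.mem_image.mpr ⟨l, hl.1, by rw [hl.2.2]; abel⟩

theorem prod_steps_eq (ν : G → G → Ω → ℝ) (p : ℕ → G) (n : ℕ) (S : Finset G)
    (hS : ∀ l < n, p l ∈ S) (a : Ω) :
    ∏ l ∈ Finset.range n, ν (p l) (p (l + 1) - p l) a
      = ∏ y ∈ S, ∏ g ∈ (Finset.range n).image (fun l => p (l + 1) - p l),
          ν y g a ^ cnt p n y g := by
  set Sg := (Finset.range n).image (fun l => p (l + 1) - p l) with hSg
  have hmap : ∀ l ∈ Finset.range n, (p l, p (l + 1) - p l) ∈ S ×ˢ Sg := fun l hl =>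
    Finset.mem_product.mpr ⟨hS l (Finset.mem_range.mp hl), Finset.mem_image_of_mem _ hl⟩
  rw [← Finset.prod_fiberwise_of_maps_to hmap (fun l => ν (p l) (p (l + 1) - p l) a),
    Finset.prod_product]
  refine Finset.prod_congr rfl fun y _ => Finset.prod_congr rfl fun g _ => ?_
  have hfil : (Finset.range n).filter (fun l => (p l, p (l + 1) - p l) = (y, g))
      = (Finset.range n).filter (fun l => p l = y ∧ p (l + 1) = p l + g) := by
    refine Finset.filter_congr fun l _ => ?_
    simp only [Prod.mk.injEq, sub_eq_iff_eq_add', decide_eq_true_eq]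
  rw [hfil]
  rw [show ((Finset.range n).filter (fun l => p l = y ∧ p (l + 1) = p l + g)).prod
        (fun l => ν (p l) (p (l + 1) - p l) a)
      = ((Finset.range n).filter (fun l => p l = y ∧ p (l + 1) = p l + g)).prod
        (fun _ => ν y g a) from Finset.prod_congr rfl fun l hl => by
          obtain ⟨-, h1, h2⟩ := Finset.mem_filter.mp hl
          rw [h1] at h2 ⊢
          rw [h2]
          congr 1
          abel]
  rw [Finset.prod_const, cnt]

theorem nu_pow_prod_mem_Icc (h : IsRWRE P ν X) (Sg : Finset G) (M : G → ℕ) (y : G) (a : Ω) :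
    0 ≤ ∏ g ∈ Sg, ν y g a ^ M g ∧ ∏ g ∈ Sg, ν y g a ^ M g ≤ 1 :=
  ⟨Finset.prod_nonneg fun g _ => pow_nonneg (h.nonneg y g a) _,
   Finset.prod_le_one (fun g _ => pow_nonneg (h.nonneg y g a) _)
     (fun g _ => pow_le_one₀ (h.nonneg y g a) (nu_le_one h y g a))⟩

theorem integral_prod_sites (h : IsRWRE P ν X) (S Sg : Finset G) (M : G → G → ℕ) :
    ∫ a, ∏ y ∈ S, ∏ g ∈ Sg, ν y g a ^ M y g ∂P
      = ∏ y ∈ S, ∫ a, ∏ g ∈ Sg, ν y g a ^ M y g ∂P := by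
  classical
  have hφmeas : ∀ y : G, Measurable (fun v : G → ℝ => ∏ g ∈ Sg, (v g) ^ M y g) := fun y =>
    Finset.measurable_prod _ fun g _ => (measurable_pi_apply g).pow_const _
  have hindep : iIndepFun (m := fun _ : G => (inferInstance : MeasurableSpace ℝ))
      (fun y ω => ∏ g ∈ Sg, ν y g ω ^ M y g) P :=
    h.indep_sites.comp (fun y v => ∏ g ∈ Sg, (v g) ^ M y g) hφmeas
  have hFmeas : ∀ y : G, Measurable (fun a => ∏ g ∈ Sg, ν y g a ^ M y g) := fun y =>
    Finset.measurable_prod _ fun g _ => (h.meas_nu y g).pow_const _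
  have hFint : ∀ y : G, Integrable (fun a => ∏ g ∈ Sg, ν y g a ^ M y g) P := fun y =>
    integrable_of_le_one (hFmeas y) (fun a => norm_le_one_of_mem_Icc
      (fun a => (nu_pow_prod_mem_Icc h Sg (M y) y a).1)
      (fun a => (nu_pow_prod_mem_Icc h Sg (M y) y a).2) a)
  induction S using Finset.induction_on with
  | empty => simp
  | insert b s ha ih =>
    have hpair : IndepFun (fun a => ∏ g ∈ Sg, ν b g a ^ M b g)
        (fun a => ∏ y ∈ s, ∏ g ∈ Sg, ν y g a ^ M y g) P := by
      have := hindep.indepFun_finsetProd_of_notMem hFmeas ha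
      have heq : (∏ j ∈ s, fun ω => ∏ g ∈ Sg, ν j g ω ^ M j g)
          = fun a => ∏ y ∈ s, ∏ g ∈ Sg, ν y g a ^ M y g := by
        funext a; exact Finset.prod_apply a s _
      rw [heq] at this
      exact this.symm
    have hsint : Integrable (fun a => ∏ y ∈ s, ∏ g ∈ Sg, ν y g a ^ M y g) P := by
      refine integrable_of_le_one (Finset.measurable_prod _ fun y _ => hFmeas y) fun a => ?_
      refine norm_le_one_of_mem_Icc
        (fun a => Finset.prod_nonneg fun y _ => (nu_pow_prod_mem_Icc h Sg (M y) y a).1)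
        (fun a => Finset.prod_le_one
          (fun y _ => (nu_pow_prod_mem_Icc h Sg (M y) y a).1)
          (fun y _ => (nu_pow_prod_mem_Icc h Sg (M y) y a).2)) a
    simp only [Finset.prod_insert ha]
    rw [← ih]
    have := hpair.integral_mul_eq_mul_integral (hFint b).aestronglyMeasurable hsint.aestronglyMeasurable
    simpa using this

theorem integral_single_site (h : IsRWRE P ν X) (Sg : Finset G) (nv : G → ℕ)
    (hsupp : ∀ g, nv g ≠ 0 → g ∈ Sg) (y : G) :
    ∫ a, ∏ g ∈ Sg, ν y g a ^ nv g ∂P = envMoment P ν nv := by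
  have hφmeas : Measurable (fun v : G → ℝ => ∏ g ∈ Sg, (v g) ^ nv g) :=
    Finset.measurable_prod _ fun g _ => (measurable_pi_apply g).pow_const _
  have hmy : Measurable (fun ω (e : G) => ν y e ω) := measurable_pi_lambda _ fun e => h.meas_nu y e
  have hm0 : Measurable (fun ω (e : G) => ν 0 e ω) := measurable_pi_lambda _ fun e => h.meas_nu 0 e
  have h1 : ∫ a, ∏ g ∈ Sg, ν y g a ^ nv g ∂P
      = ∫ v, ∏ g ∈ Sg, (v g) ^ nv g ∂(Measure.map (fun ω (e : G) => ν y e ω) P) := by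
    rw [integral_map hmy.aemeasurable hφmeas.aestronglyMeasurable]
  have h2 : ∫ a, ∏ g ∈ Sg, ν 0 g a ^ nv g ∂P
      = ∫ v, ∏ g ∈ Sg, (v g) ^ nv g ∂(Measure.map (fun ω (e : G) => ν 0 e ω) P) := by
    rw [integral_map hm0.aemeasurable hφmeas.aestronglyMeasurable]
  rw [h1, h.ident_sites y, ← h2, envMoment]
  refine integral_congr_ae (ae_of_all _ fun a => ?_)
  show ∏ g ∈ Sg, ν 0 g a ^ nv g = ∏ᶠ g : G, ν 0 g a ^ nv g
  refine (finprod_eq_finset_prod_of_mulSupport_subset _ ?_).symm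
  intro g hg
  rw [Function.mem_mulSupport] at hg
  by_contra hgS
  have : nv g = 0 := by by_contra hnv; exact hgS (hsupp g hnv)
  rw [this, pow_zero] at hg
  exact hg rfl

theorem atom_prob (h : IsRWRE P ν X) (n : ℕ) (p : ℕ → G) (hp0 : p 0 = 0) (S : Finset G)
    (hS : ∀ l < n, p l ∈ S) :
    (P (pathSet X p n)).toReal = ∏ y ∈ S, envMoment P ν (cnt p n y) := by
  have h1 := pathSet_integral h n p hp0 (fun _ => 1) measurable_const (fun _ => zero_le_one)
    (fun _ => le_rfl)
  simp only [one_mul] at h1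
  have h2 : (P (pathSet X p n)).toReal = ∫ _ in pathSet X p n, (1 : ℝ) ∂P := by
    rw [setIntegral_const, smul_eq_mul, mul_one, measureReal_def]
  rw [h2, h1]
  have h3 : ∀ a : Ω, ∏ l ∈ Finset.range n, ν (p l) (p (l + 1) - p l) a
      = ∏ y ∈ S, ∏ g ∈ (Finset.range n).image (fun l => p (l + 1) - p l),
          ν y g a ^ cnt p n y g := fun a => prod_steps_eq ν p n S hS a
  rw [integral_congr_ae (ae_of_all _ h3), integral_prod_sites h S _ (cnt p n)]
  exact Finset.prod_congr rfl fun y _ =>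
    integral_single_site h _ (cnt p n y) (fun g hg => cnt_support_subset hg) y

end Product

section Assembly

theorem pathSet_succ (p : ℕ → G) (n : ℕ) :
    pathSet X p (n + 1) = pathSet X p n ∩ X (n + 1) ⁻¹' {p (n + 1)} := by
  ext ω
  simp only [pathSet, Set.mem_setOf_eq, Set.mem_inter_iff, Set.mem_preimage,
    Set.mem_singleton_iff]
  constructor
  · exact fun hh => ⟨fun i hi => hh i (hi.trans (Nat.le_succ n)), hh (n + 1) le_rfl⟩
  · rintro ⟨h1, h2⟩ i hi
    rcases Nat.le_succ_iff.mp hi with hi' | rfl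
    · exact h1 i hi'
    · exact h2

theorem envMoment_add_single [IsProbabilityMeasure P] (ν : G → G → Ω → ℝ) (nv : G → ℕ)
    (hnv : (Function.support nv).Finite) (e : G) :
    envMoment P ν (fun g => nv g + if g = e then 1 else 0) = envMoment1 P ν nv e := by
  rw [envMoment, envMoment1]
  refine integral_congr_ae (ae_of_all _ fun a => ?_)
  have hsupp1 : (Function.mulSupport fun g => ν 0 g a ^ nv g).Finite := by
    refine Set.Finite.subset hnv fun g hg => ?_
    rw [Function.mem_mulSupport] at hg
    by_contra hns
    rw [Function.notMem_support.mp hns, pow_zero] at hg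
    exact hg rfl
  have hsupp2 : (Function.mulSupport fun g => ν 0 g a ^ (if g = e then 1 else 0)).Finite := by
    refine Set.Finite.subset (Set.finite_singleton e) fun g hg => ?_
    rw [Function.mem_mulSupport] at hg
    by_contra hge
    rw [Set.mem_singleton_iff] at hge
    rw [if_neg hge, pow_zero] at hg
    exact hg rfl
  have hmul : ∀ g : G, ν 0 g a ^ (nv g + if g = e then 1 else 0)
      = ν 0 g a ^ nv g * ν 0 g a ^ (if g = e then 1 else 0) := fun g => pow_add _ _ _
  calc ∏ᶠ g : G, ν 0 g a ^ (nv g + if g = e then 1 else 0)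
      = ∏ᶠ g : G, (ν 0 g a ^ nv g * ν 0 g a ^ (if g = e then 1 else 0)) := by
        exact finprod_congr hmul
    _ = (∏ᶠ g : G, ν 0 g a ^ nv g) * ∏ᶠ g : G, ν 0 g a ^ (if g = e then 1 else 0) :=
        finprod_mul_distrib hsupp1 hsupp2
    _ = ν 0 e a * ∏ᶠ g : G, ν 0 g a ^ nv g := by
        rw [mul_comm]
        congr 1
        rw [finprod_eq_single _ e (fun g hg => by rw [if_neg hg, pow_zero]), if_pos rfl, pow_one]

end Assembly

end RWREAux

/-- the annealed one-step transition probability given the past depends only on the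
unordered history of the current site, via the ratio-of-moments formula. -/
theorem annealed_transition_eq_moment_ratio {G Ω : Type*} [AddCommGroup G] [Countable G]
    [MeasurableSpace G] [MeasurableSingletonClass G] [DecidableEq G] [mΩ : MeasurableSpace Ω]
    (P : Measure Ω) [IsProbabilityMeasure P] (ν : G → G → Ω → ℝ) (X : ℕ → Ω → G)
    (h : IsRWRE P ν X) :
    ∀ (n : ℕ) (x e : G), ∀ᵐ ω ∂P, X n ω = x →
      (P[Set.indicator {ω' | X (n + 1) ω' = x + e} (fun _ => (1 : ℝ)) | natFilt X n]) ω
        = envMoment1 P ν (fun g => jumpCount X g x n ω) e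
            / envMoment P ν (fun g => jumpCount X g x n ω) := by
  classical
  open RWREAux in
  intro n x e
  have hX := h.meas_X
  set B : Set Ω := {ω' | X (n + 1) ω' = x + e} with hB_def
  have hBmeas : MeasurableSet B := h.meas_X (n + 1) (measurableSet_singleton (x + e))
  set f : Ω → ℝ := Set.indicator B (fun _ => (1 : ℝ)) with hf_def
  have hfm : Measurable f := measurable_const.indicator hBmeas
  have hf0 : ∀ ω, 0 ≤ f ω := fun ω => Set.indicator_nonneg (fun _ _ => zero_le_one) ω
  have hf1 : ∀ ω, f ω ≤ 1 := fun ω => by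
    by_cases hω : ω ∈ B <;> simp [hf_def, hω]
  filter_upwards [condexp_natFilt_ae hX n hfm hf0 hf1, ae_atom_pos (P := P) hX n]
    with ω hcond hpos hXn
  set p : ℕ → G := fun i => if i ≤ n then X i ω else x + e with hp_def
  have hp_agree : ∀ i ≤ n, X i ω = p i := fun i hi => (if_pos hi).symm
  have hp0 : p 0 = 0 := by
    show (if 0 ≤ n then X 0 ω else x + e) = 0
    rw [if_pos (Nat.zero_le n), h.start ω]
  have hpn : p n = x := by
    show (if n ≤ n then X n ω else x + e) = x
    rw [if_pos le_rfl, hXn]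
  have hpn1 : p (n + 1) = x + e := by
    show (if n + 1 ≤ n then X (n + 1) ω else x + e) = x + e
    rw [if_neg (Nat.not_succ_le_self n)]
  have hatom : vec X n ⁻¹' {vec X n ω} = pathSet X p n := by
    rw [← pathSet_eq_fiber n ω]; exact pathSet_congr hp_agree
  have hnum : ∫ a in vec X n ⁻¹' {vec X n ω}, f a ∂P = (P (pathSet X p (n + 1))).toReal := by
    rw [hatom, hf_def, setIntegral_indicator hBmeas]
    have hAB : pathSet X p n ∩ B = pathSet X p (n + 1) := by
      rw [pathSet_succ p n, hpn1]
      rfl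
    rw [hAB, setIntegral_const, smul_eq_mul, mul_one, measureReal_def]
  set S : Finset G := (Finset.range (n + 1)).image p with hS_def
  have hxS : x ∈ S := by
    rw [hS_def]
    exact Finset.mem_image.mpr ⟨n, Finset.mem_range.mpr (Nat.lt_succ_self n), hpn⟩
  have hSn : ∀ l < n, p l ∈ S := fun l hl =>
    Finset.mem_image.mpr ⟨l, Finset.mem_range.mpr (hl.trans (Nat.lt_succ_self n)), rfl⟩
  have hSn1 : ∀ l < n + 1, p l ∈ S := fun l hl =>
    Finset.mem_image.mpr ⟨l, Finset.mem_range.mpr hl, rfl⟩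
  have hden := atom_prob h n p hp0 S hSn
  have hnum2 := atom_prob h (n + 1) p hp0 S hSn1
  set nv : G → ℕ := fun g => jumpCount X g x n ω with hnv_def
  have hcnt_n : cnt p n x = nv := by
    funext g
    show (((Finset.range n).filter (fun l => p l = x ∧ p (l + 1) = p l + g)).card)
      = ((Finset.range n).filter (fun l => X l ω = x ∧ X (l + 1) ω = X l ω + g)).card
    congr 1
    refine Finset.filter_congr fun l hl => ?_
    rw [Finset.mem_range] at hl
    rw [← hp_agree l hl.le, ← hp_agree (l + 1) (Nat.succ_le_of_lt hl)]
  have hcondn : (p n = x ∧ p (n + 1) = p n + e) := by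
    refine ⟨hpn, ?_⟩
    rw [hpn1, hpn]
  have hcnt_n1x : cnt p (n + 1) x = fun g => nv g + if g = e then 1 else 0 := by
    funext g
    rw [← hcnt_n]
    rw [cnt, cnt, Finset.range_add_one, Finset.filter_insert]
    by_cases hge : g = e
    · rw [if_pos (by rw [hge]; exact hcondn), if_pos hge,
        Finset.card_insert_of_notMem (fun hmem => by
          exact absurd (Finset.mem_range.mp (Finset.mem_of_mem_filter n hmem)) (lt_irrefl n))]
    · rw [if_neg (fun hc => hge (by
        have := hc.2
        rw [hpn1, hpn] at this
        exact (add_right_injective x this).symm)), if_neg hge, Nat.add_zero]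
  have hcnt_y : ∀ y ∈ S.erase x, cnt p (n + 1) y = cnt p n y := by
    intro y hy
    have hyx : y ≠ x := (Finset.mem_erase.mp hy).1
    funext g
    rw [cnt, cnt, Finset.range_add_one, Finset.filter_insert,
      if_neg (fun hc => hyx (by rw [← hc.1, hpn]))]
  have hprod_n : (P (pathSet X p n)).toReal
      = envMoment P ν nv * ∏ y ∈ S.erase x, envMoment P ν (cnt p n y) := by
    rw [hden, ← Finset.mul_prod_erase S _ hxS, hcnt_n]
  have hprod_n1 : (P (pathSet X p (n + 1))).toReal
      = envMoment P ν (fun g => nv g + if g = e then 1 else 0)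
        * ∏ y ∈ S.erase x, envMoment P ν (cnt p n y) := by
    rw [hnum2, ← Finset.mul_prod_erase S _ hxS, hcnt_n1x]
    congr 1
    exact Finset.prod_congr rfl fun y hy => by rw [hcnt_y y hy]
  have hden_pos : (P (pathSet X p n)).toReal ≠ 0 := by
    rw [← hatom]
    exact ENNReal.toReal_ne_zero.mpr ⟨hpos, measure_ne_top _ _⟩
  have hC : (∏ y ∈ S.erase x, envMoment P ν (cnt p n y)) ≠ 0 := by
    intro h0
    exact hden_pos (by rw [hprod_n, h0, mul_zero])
  have hnv_fin : (Function.support nv).Finite := by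
    refine Set.Finite.subset
      (Finset.finite_toSet ((Finset.range n).image (fun l => X (l + 1) ω - X l ω)))
      fun g hg => ?_
    rw [Function.mem_support] at hg
    exact cnt_support_subset (p := fun i => X i ω) (n := n) (y := x) hg
  rw [hcond, atomAvg, hnum, hatom, hprod_n1, hprod_n, mul_div_mul_right _ _ hC,
    envMoment_add_single ν nv hnv_fin e]
end

section
/- An element r ∈ E belongs to R if and only if P^μ(X_1 = r and X_n = 0 for some n > 1) > 0; that is, r is a possible first jump from which the walk returns to the origin with positive probability. -/
open MeasureTheory ProbabilityTheory Filter

section AuxLemmas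

namespace RwreAux

open MeasureTheory ProbabilityTheory

variable {G Ω : Type*} [AddCommGroup G] [Countable G]
    [MeasurableSpace G] [MeasurableSingletonClass G] [DecidableEq G] [mΩ : MeasurableSpace Ω]
    {P : Measure Ω} [IsProbabilityMeasure P] {ν : G → G → Ω → ℝ} {X : ℕ → Ω → G}

lemma nu_le_one (h : IsRWRE P ν X) (x e : G) (ω : Ω) : ν x e ω ≤ 1 :=
  le_hasSum (h.sum_one x ω) e fun e' _ => h.nonneg x e' ω

lemma integrable01 {f : Ω → ℝ} (hm : Measurable f) (h0 : ∀ ω, 0 ≤ f ω) (h1 : ∀ ω, f ω ≤ 1) :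
    Integrable f P :=
  Integrable.mono' (integrable_const 1) hm.aestronglyMeasurable
    (Filter.Eventually.of_forall fun ω => by
      rw [Real.norm_eq_abs, abs_of_nonneg (h0 ω)]; exact h1 ω)

lemma ind_nonneg (s : Set Ω) (ω : Ω) : 0 ≤ Set.indicator s (fun _ => (1:ℝ)) ω :=
  Set.indicator_nonneg (fun _ _ => zero_le_one) ω

lemma ind_le_one (s : Set Ω) (ω : Ω) : Set.indicator s (fun _ => (1:ℝ)) ω ≤ 1 :=
  Set.indicator_le' (fun _ _ => le_rfl) (fun _ _ => zero_le_one) ω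

lemma integrable_prod_nu {ι : Type*} (h : IsRWRE P ν X) (s : Finset ι) (a b : ι → G) :
    Integrable (fun ω => ∏ i ∈ s, ν (a i) (b i) ω) P :=
  integrable01 (Finset.measurable_prod s fun i _ => h.meas_nu (a i) (b i))
    (fun ω => Finset.prod_nonneg fun i _ => h.nonneg _ _ ω)
    (fun ω => Finset.prod_le_one (fun i _ => h.nonneg _ _ ω) (fun i _ => nu_le_one h _ _ ω))

lemma measurable_env (h : IsRWRE P ν X) (x : G) : Measurable fun ω (e : G) => ν x e ω :=
  measurable_pi_lambda _ fun e => h.meas_nu x e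

lemma envSigma_le (h : IsRWRE P ν X) : envSigma ν ≤ mΩ :=
  iSup_le fun x => measurable_iff_comap_le.1 (measurable_env h x)

lemma natFilt_le (h : IsRWRE P ν X) (n : ℕ) : natFilt X n ≤ mΩ :=
  iSup_le fun i => iSup_le fun _ => measurable_iff_comap_le.1 (h.meas_X i)

lemma measurable_nu_env (h : IsRWRE P ν X) (x e : G) : Measurable[envSigma ν] (ν x e) := by
  have h1 : Measurable[MeasurableSpace.comap (fun ω (e' : G) => ν x e' ω) inferInstance]
      (fun ω (e' : G) => ν x e' ω) := measurable_iff_comap_le.2 le_rfl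
  exact ((measurable_pi_apply e).comp h1).mono
    (le_iSup (fun y => MeasurableSpace.comap (fun ω (e' : G) => ν y e' ω) inferInstance) x) le_rfl

lemma integral_nu_eq (h : IsRWRE P ν X) (x e : G) :
    ∫ ω, ν x e ω ∂P = ∫ ω, ν 0 e ω ∂P := by
  calc ∫ ω, ν x e ω ∂P
      = ∫ f, f e ∂(Measure.map (fun ω (e' : G) => ν x e' ω) P) := by
        rw [integral_map (measurable_env h x).aemeasurable
          (measurable_pi_apply e).aestronglyMeasurable]
    _ = ∫ f, f e ∂(Measure.map (fun ω (e' : G) => ν 0 e' ω) P) := by rw [h.ident_sites x]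
    _ = ∫ ω, ν 0 e ω ∂P := by
        rw [integral_map (measurable_env h 0).aemeasurable
          (measurable_pi_apply e).aestronglyMeasurable]

lemma mem_Ejumps_iff_integral_pos (h : IsRWRE P ν X) (e : G) :
    e ∈ Ejumps P ν ↔ 0 < ∫ ω, ν 0 e ω ∂P := by
  have hi : Integrable (ν 0 e) P := integrable01 (h.meas_nu 0 e) (h.nonneg 0 e) (nu_le_one h 0 e)
  have hsupp : Function.support (ν 0 e) = {ω | 0 < ν 0 e ω} := by
    ext ω
    simp only [Function.mem_support, Set.mem_setOf_eq]
    exact ⟨fun hne => (h.nonneg 0 e ω).lt_of_ne' hne, fun hp => hp.ne'⟩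
  rw [integral_pos_iff_support_of_nonneg (h.nonneg 0 e) hi, hsupp]
  exact Iff.rfl

lemma nu_ae_zero_of_not_mem (h : IsRWRE P ν X) {e : G} (he : e ∉ Ejumps P ν) (x : G) :
    ν x e =ᵐ[P] 0 := by
  have hi : Integrable (ν x e) P := integrable01 (h.meas_nu x e) (h.nonneg x e) (nu_le_one h x e)
  have h0 : ∫ ω, ν x e ω ∂P = 0 := by
    rw [integral_nu_eq h x e]
    exact le_antisymm (not_lt.1 ((mem_Ejumps_iff_integral_pos h e).not.1 he))
      (integral_nonneg (h.nonneg 0 e))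
  exact (integral_eq_zero_iff_of_nonneg (h.nonneg x e) hi).1 h0

end RwreAux

end AuxLemmas
section AuxLemmas2

namespace RwreAux

open MeasureTheory ProbabilityTheory

variable {G Ω : Type*} [AddCommGroup G] [Countable G]
    [MeasurableSpace G] [MeasurableSingletonClass G] [DecidableEq G] [mΩ : MeasurableSpace Ω]
    {P : Measure Ω} [IsProbabilityMeasure P] {ν : G → G → Ω → ℝ} {X : ℕ → Ω → G}

lemma measurableSet_path (h : IsRWRE P ν X) (x : ℕ → G) (n : ℕ) :
    MeasurableSet {ω | ∀ i ≤ n, X i ω = x i} := by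
  have : {ω | ∀ i ≤ n, X i ω = x i} = ⋂ i ∈ Set.Iic n, X i ⁻¹' {x i} := by
    ext ω; simp [Set.mem_iInter, Set.mem_Iic]
  rw [this]
  exact MeasurableSet.biInter (Set.to_countable _)
    fun i _ => h.meas_X i (measurableSet_singleton _)

lemma measurableSet_path_filt (h : IsRWRE P ν X) (x : ℕ → G) (k : ℕ) :
    MeasurableSet[envSigma ν ⊔ natFilt X k] {ω | ∀ i ≤ k, X i ω = x i} := by
  have heq : {ω | ∀ i ≤ k, X i ω = x i} = ⋂ i ∈ Set.Iic k, X i ⁻¹' {x i} := by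
    ext ω; simp [Set.mem_iInter, Set.mem_Iic]
  rw [heq]
  refine MeasurableSet.biInter (Set.to_countable _) fun i hi => ?_
  refine le_sup_right (α := MeasurableSpace Ω) _ ?_
  have hle : MeasurableSpace.comap (X i) inferInstance ≤ natFilt X k :=
    le_biSup (fun j => MeasurableSpace.comap (X j) inferInstance) hi
  exact hle _ ⟨{x i}, measurableSet_singleton _, rfl⟩

lemma path_integral (h : IsRWRE P ν X) (x : ℕ → G) (hx0 : x 0 = 0) (n : ℕ) :
    ∫ ω, Set.indicator {ω' | ∀ i ≤ n, X i ω' = x i} (fun _ => (1:ℝ)) ω ∂P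
      = ∫ ω, ∏ i ∈ Finset.range n, ν (x i) (x (i+1) - x i) ω ∂P := by
  set F : ℕ → Ω → ℝ := fun k ω =>
    Set.indicator {ω' | ∀ i ≤ k, X i ω' = x i} (fun _ => (1:ℝ)) ω *
      ∏ i ∈ Finset.Ico k n, ν (x i) (x (i+1) - x i) ω with hF
  have step : ∀ k, k < n → ∫ ω, F (k+1) ω ∂P = ∫ ω, F k ω ∂P := by
    intro k hk
    set e : G := x (k+1) - x k with he
    have hle : envSigma ν ⊔ natFilt X k ≤ mΩ := sup_le (envSigma_le h) (natFilt_le h k)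
    haveI : SigmaFinite (P.trim hle) := by
      haveI := isFiniteMeasure_trim (μ := P) hle
      infer_instance
    set A : Set Ω := {ω | ∀ i ≤ k, X i ω = x i} with hA
    set g : Ω → ℝ := fun ω => Set.indicator A (fun _ => (1:ℝ)) ω *
      ∏ i ∈ Finset.Ico (k+1) n, ν (x i) (x (i+1) - x i) ω with hg
    set S : Ω → ℝ := Set.indicator {ω' | X (k+1) ω' = x k + e} (fun _ => (1:ℝ)) with hS
    have hxk1 : x k + e = x (k+1) := by rw [he]; abel
    have hFk1 : ∀ ω, F (k+1) ω = (g * S) ω := by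
      intro ω
      have hmem : (ω ∈ {ω' | ∀ i ≤ k+1, X i ω' = x i}) ↔ (ω ∈ A ∧ X (k+1) ω = x (k+1)) := by
        constructor
        · intro hh; exact ⟨fun i hi => hh i (hi.trans (Nat.le_succ k)), hh (k+1) le_rfl⟩
        · rintro ⟨hh, h2⟩ i hi
          rcases eq_or_lt_of_le hi with rfl | hlt
          · exact h2
          · exact hh i (Nat.lt_succ_iff.mp hlt)
      simp only [F, hg, hS, Pi.mul_apply, hxk1]
      by_cases h1 : ω ∈ A <;> by_cases h2 : X (k+1) ω = x (k+1)
      · rw [Set.indicator_of_mem (hmem.2 ⟨h1, h2⟩), Set.indicator_of_mem h1,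
          Set.indicator_of_mem (by exact h2 : ω ∈ {ω' | X (k+1) ω' = x (k+1)})]
        ring
      · rw [Set.indicator_of_notMem (fun hc => h2 (hmem.1 hc).2),
          Set.indicator_of_notMem (by exact h2 : ω ∉ {ω' | X (k+1) ω' = x (k+1)})]
        ring
      · rw [Set.indicator_of_notMem (fun hc => h1 (hmem.1 hc).1),
          Set.indicator_of_notMem h1]
        ring
      · rw [Set.indicator_of_notMem (fun hc => h1 (hmem.1 hc).1),
          Set.indicator_of_notMem h1]
        ring
    have hFk : ∀ ω, F k ω = g ω * ν (x k) e ω := by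
      intro ω
      simp only [F, hg]
      rw [Finset.prod_eq_prod_Ico_succ_bot hk]
      ring
    have hAm : MeasurableSet[envSigma ν ⊔ natFilt X k] A := measurableSet_path_filt h x k
    have hgm : StronglyMeasurable[envSigma ν ⊔ natFilt X k] g := by
      refine Measurable.stronglyMeasurable ?_
      exact (Measurable.indicator measurable_const hAm).mul
        (Finset.measurable_prod _ fun i _ =>
          (measurable_nu_env h (x i) (x (i+1) - x i)).mono le_sup_left le_rfl)
    have hg_meas : Measurable g :=
      (Measurable.indicator measurable_const ((measurableSet_path h x k))).mul
        (Finset.measurable_prod _ fun i _ => h.meas_nu _ _)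
    have hg0 : ∀ ω, 0 ≤ g ω := fun ω => mul_nonneg (ind_nonneg _ _)
      (Finset.prod_nonneg fun i _ => h.nonneg _ _ ω)
    have hg1 : ∀ ω, g ω ≤ 1 := fun ω =>
      mul_le_one₀ (ind_le_one _ _) (Finset.prod_nonneg fun i _ => h.nonneg _ _ ω)
        (Finset.prod_le_one (fun i _ => h.nonneg _ _ ω) (fun i _ => nu_le_one h _ _ ω))
    have hSmeas : Measurable S := Measurable.indicator measurable_const
      (by exact h.meas_X (k+1) (measurableSet_singleton (x k + e)))
    have hS_int : Integrable S P := integrable01 hSmeas (ind_nonneg _) (ind_le_one _)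
    have hgS_int : Integrable (g * S) P :=
      integrable01 (hg_meas.mul hSmeas)
        (fun ω => mul_nonneg (hg0 ω) (ind_nonneg _ _))
        (fun ω => mul_le_one₀ (hg1 ω) (ind_nonneg _ _) (ind_le_one _ _))
    calc ∫ ω, F (k+1) ω ∂P = ∫ ω, (g * S) ω ∂P := by
          exact integral_congr_ae (Filter.Eventually.of_forall hFk1)
      _ = ∫ ω, (P[g * S|envSigma ν ⊔ natFilt X k]) ω ∂P := (integral_condExp hle).symm
      _ = ∫ ω, (g * P[S|envSigma ν ⊔ natFilt X k]) ω ∂P :=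
          integral_congr_ae (condExp_mul_of_stronglyMeasurable_left hgm hgS_int hS_int)
      _ = ∫ ω, g ω * ν (x k) e ω ∂P := by
          refine integral_congr_ae ?_
          filter_upwards [h.quenched k (x k) e] with ω hq
          by_cases hmemA : ω ∈ A
          · have hXk : X k ω = x k := hmemA k le_rfl
            simp only [Pi.mul_apply]
            rw [hq hXk]
          · simp only [Pi.mul_apply, hg, Set.indicator_of_notMem hmemA, zero_mul]
      _ = ∫ ω, F k ω ∂P := integral_congr_ae (Filter.Eventually.of_forall fun ω => (hFk ω).symm)
  have main : ∀ k, k ≤ n → ∫ ω, F k ω ∂P = ∫ ω, F 0 ω ∂P := by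
    intro k
    induction k with
    | zero => intro _; rfl
    | succ k ih =>
      intro hk
      rw [step k (Nat.lt_of_succ_le hk)]
      exact ih (Nat.le_of_succ_le hk)
  have hFn : ∀ ω, F n ω = Set.indicator {ω' | ∀ i ≤ n, X i ω' = x i} (fun _ => (1:ℝ)) ω := by
    intro ω; simp [F, Finset.Ico_self]
  have hF0 : ∀ ω, F 0 ω = ∏ i ∈ Finset.range n, ν (x i) (x (i+1) - x i) ω := by
    intro ω
    have huniv : ω ∈ {ω' | ∀ i ≤ 0, X i ω' = x i} := by
      intro i hi
      rw [Nat.le_zero.mp hi, h.start ω, hx0]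
    simp only [F, Set.indicator_of_mem huniv, one_mul]
    rw [Finset.range_eq_Ico]
  calc ∫ ω, Set.indicator {ω' | ∀ i ≤ n, X i ω' = x i} (fun _ => (1:ℝ)) ω ∂P
      = ∫ ω, F n ω ∂P := integral_congr_ae (Filter.Eventually.of_forall fun ω => (hFn ω).symm)
    _ = ∫ ω, F 0 ω ∂P := main n le_rfl
    _ = ∫ ω, ∏ i ∈ Finset.range n, ν (x i) (x (i+1) - x i) ω ∂P :=
        integral_congr_ae (Filter.Eventually.of_forall hF0)

end RwreAux

end AuxLemmas2
section AuxLemmas3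

namespace RwreAux

open MeasureTheory ProbabilityTheory

variable {G Ω : Type*} [AddCommGroup G] [Countable G]
    [MeasurableSpace G] [MeasurableSingletonClass G] [DecidableEq G] [mΩ : MeasurableSpace Ω]
    {P : Measure Ω} [IsProbabilityMeasure P] {ν : G → G → Ω → ℝ} {X : ℕ → Ω → G}

lemma integral_prod_sites (h : IsRWRE P ν X) (J : G → G) (s : Finset G) :
    ∫ ω, ∏ y ∈ s, ν y (J y) ω ∂P = ∏ y ∈ s, ∫ ω, ν y (J y) ω ∂P := by
  classical
  set f : G → Ω → ℝ := fun y ω => ν y (J y) ω with hf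
  have hmeas : ∀ y, Measurable (f y) := fun y => h.meas_nu y (J y)
  have hind : iIndepFun (m := fun _ : G => (inferInstance : MeasurableSpace ℝ)) f P :=
    h.indep_sites.comp (fun y (fn : G → ℝ) => fn (J y)) (fun y => measurable_pi_apply (J y))
  induction s using Finset.induction_on with
  | empty => simp
  | insert a s ha ih =>
    have hint_a : Integrable (f a) P :=
      integrable01 (hmeas a) (fun ω => h.nonneg _ _ ω) (fun ω => nu_le_one h _ _ ω)
    have hprod_eq : (∏ y ∈ s, f y) = fun ω => ∏ y ∈ s, ν y (J y) ω := by
      funext ω; rw [Finset.prod_apply]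
    have hint_prod : Integrable (∏ y ∈ s, f y) P := by
      rw [hprod_eq]; exact integrable_prod_nu h s id J
    have hindep : IndepFun (f a) (∏ y ∈ s, f y) P :=
      (hind.indepFun_finsetProd_of_notMem hmeas ha).symm
    have key := hindep.integral_mul_eq_mul_integral hint_a.aestronglyMeasurable
      hint_prod.aestronglyMeasurable
    calc ∫ ω, ∏ y ∈ insert a s, ν y (J y) ω ∂P
        = ∫ ω, (f a * ∏ y ∈ s, f y) ω ∂P := by
          refine integral_congr_ae (Filter.Eventually.of_forall fun ω => ?_)
          show ∏ y ∈ insert a s, ν y (J y) ω = _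
          rw [Finset.prod_insert ha, Pi.mul_apply, Finset.prod_apply]
      _ = (∫ ω, f a ω ∂P) * ∫ ω, (∏ y ∈ s, f y) ω ∂P := key
      _ = (∫ ω, ν a (J a) ω ∂P) * ∏ y ∈ s, ∫ ω, ν y (J y) ω ∂P := by
          rw [hprod_eq]; rw [ih]
      _ = ∏ y ∈ insert a s, ∫ ω, ν y (J y) ω ∂P := by rw [Finset.prod_insert ha]

lemma erase_loops {r : G} (hr0 : r ≠ 0) :
    ∀ n : ℕ, ∀ x : ℕ → G, x 0 = 0 → x 1 = r → x n = 0 → 2 ≤ n →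
      (∀ i < n, x (i+1) - x i ∈ Ejumps P ν) →
      ∃ m : ℕ, ∃ z : ℕ → G, z 0 = 0 ∧ z 1 = r ∧ z m = 0 ∧ 2 ≤ m ∧
        (∀ i < m, z (i+1) - z i ∈ Ejumps P ν) ∧ Set.InjOn z (Set.Iio m) := by
  intro n
  induction n using Nat.strong_induction_on with
  | _ n IH =>
    intro x hx0 hx1 hxn h2n hjumps
    by_cases hinj : Set.InjOn x (Set.Iio n)
    · exact ⟨n, x, hx0, hx1, hxn, h2n, hjumps, hinj⟩
    · rw [Set.InjOn] at hinj
      push_neg at hinj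
      obtain ⟨i0, hi0, j0, hj0, hxij0, hij0⟩ := hinj
      rw [Set.mem_Iio] at hi0 hj0
      obtain ⟨i, j, hi, hj, hxij, hlt⟩ : ∃ i j, i < n ∧ j < n ∧ x i = x j ∧ i < j := by
        rcases lt_or_gt_of_ne hij0 with hlt | hlt
        exacts [⟨i0, j0, hi0, hj0, hxij0, hlt⟩, ⟨j0, i0, hj0, hi0, hxij0.symm, hlt⟩]
      by_cases hieq0 : i = 0
      · subst hieq0
        have hxj : x j = 0 := by rw [← hxij, hx0]
        have hj1 : j ≠ 1 := by
          intro hc; subst hc; exact hr0 (by rw [← hx1, hxj])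
        have h2j : 2 ≤ j := by omega
        exact IH j hj x hx0 hx1 hxj h2j (fun i' hi' => hjumps i' (hi'.trans hj))
      · have hi1 : 1 ≤ i := by omega
        set d := j - i with hd
        have hd0 : 0 < d := by omega
        set m' := n - d with hm'
        set z : ℕ → G := fun k => if k ≤ i then x k else x (k + d) with hz
        have him' : i < m' := by omega
        have h2m' : 2 ≤ m' := by omega
        have hm'n : m' < n := by omega
        have hz0 : z 0 = 0 := by simp only [hz, if_pos (Nat.zero_le i)]; exact hx0
        have hz1 : z 1 = r := by simp only [hz, if_pos hi1]; exact hx1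
        have hzm' : z m' = 0 := by
          simp only [hz, if_neg (by omega : ¬ m' ≤ i)]
          have hmn : m' + d = n := by omega
          rw [hmn, hxn]
        have hzjumps : ∀ k < m', z (k+1) - z k ∈ Ejumps P ν := by
          intro k hk
          by_cases hk1 : k + 1 ≤ i
          · simp only [hz, if_pos hk1, if_pos (by omega : k ≤ i)]
            exact hjumps k (by omega)
          · by_cases hki : k ≤ i
            · have hkeq : k = i := by omega
              subst hkeq
              simp only [hz, if_neg hk1, if_pos hki]
              have h1 : k + 1 + d = j + 1 := by omega
              rw [h1, hxij]
              exact hjumps j hj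
            · simp only [hz, if_neg hk1, if_neg (by omega : ¬ k + 1 ≤ i), if_neg hki]
              have h1 : k + 1 + d = (k + d) + 1 := by omega
              rw [h1]
              exact hjumps (k + d) (by omega)
        exact IH m' hm'n z hz0 hz1 hzm' h2m' hzjumps

end RwreAux

end AuxLemmas3
section AuxLemmas4

namespace RwreAux

open MeasureTheory ProbabilityTheory

variable {G Ω : Type*} [AddCommGroup G] [Countable G]
    [MeasurableSpace G] [MeasurableSingletonClass G] [DecidableEq G] [mΩ : MeasurableSpace Ω]
    {P : Measure Ω} [IsProbabilityMeasure P] {ν : G → G → Ω → ℝ} {X : ℕ → Ω → G}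

lemma event_pos_of_path (h : IsRWRE P ν X) (x : ℕ → G) (hx0 : x 0 = 0) {n : ℕ}
    (hn : 2 ≤ n) (hxn : x n = 0)
    (hpos : 0 < ∫ ω, ∏ i ∈ Finset.range n, ν (x i) (x (i+1) - x i) ω ∂P) :
    0 < P {ω | X 1 ω = x 1 ∧ ∃ m > 1, X m ω = 0} := by
  set A : Set Ω := {ω | ∀ i ≤ n, X i ω = x i} with hA
  have hAm : MeasurableSet A := measurableSet_path h x n
  have hint : ∫ ω, Set.indicator A (fun _ => (1:ℝ)) ω ∂P = (P A).toReal :=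
    integral_indicator_one hAm
  have h2 : 0 < (P A).toReal := by
    rw [← hint, path_integral h x hx0 n]; exact hpos
  have h3 : 0 < P A := (ENNReal.toReal_pos_iff.mp h2).1
  refine lt_of_lt_of_le h3 (measure_mono ?_)
  intro ω hω
  exact ⟨hω 1 (by omega), n, by omega, by rw [hω n le_rfl, hxn]⟩

end RwreAux

end AuxLemmas4
open RwreAux in
/-- `r ∈ E` belongs to `R` iff with positive probability the first jump is `r`
and the walk later returns to the origin. -/
theorem mem_Rset_iff_return {G Ω : Type*} [AddCommGroup G] [Countable G]
    [MeasurableSpace G] [MeasurableSingletonClass G] [DecidableEq G] [mΩ : MeasurableSpace Ω]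
    (P : Measure Ω) [IsProbabilityMeasure P] (ν : G → G → Ω → ℝ) (X : ℕ → Ω → G)
    (h : IsRWRE P ν X) (r : G) (hr : r ∈ Ejumps P ν) :
    r ∈ Rset P ν ↔ 0 < P {ω | X 1 ω = r ∧ ∃ n > 1, X n ω = 0} := by
  classical
  constructor
  · rintro ⟨hrE, l, hlne, hlE, hlsum⟩
    by_cases hr0 : r = 0
    · -- degenerate case: use the path 0, 0, 0
      subst hr0
      have hpeq : (fun ω => ∏ i ∈ Finset.range 2,
          ν ((fun _ => (0:G)) i) ((fun _ => (0:G)) (i+1) - (fun _ => (0:G)) i) ω)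
          = fun ω => ν 0 0 ω ^ 2 := by
        funext ω
        simp [Finset.prod_const, sub_zero]
      have hintble : Integrable (fun ω => ν 0 0 ω ^ 2) P :=
        integrable01 ((h.meas_nu 0 0).pow_const 2)
          (fun ω => pow_nonneg (h.nonneg 0 0 ω) 2)
          (fun ω => pow_le_one₀ (h.nonneg 0 0 ω) (nu_le_one h 0 0 ω))
      have hsupp : Function.support (fun ω => ν 0 0 ω ^ 2) = {ω | 0 < ν 0 0 ω} := by
        ext ω
        simp only [Function.mem_support, Set.mem_setOf_eq, pow_eq_zero_iff, ne_eq,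
          OfNat.ofNat_ne_zero, not_false_eq_true, and_true]
        constructor
        · intro hne
          have : ν 0 0 ω ≠ 0 := by simpa using hne
          exact (h.nonneg 0 0 ω).lt_of_ne' this
        · intro hp
          simpa using hp.ne'
      have hpos : 0 < ∫ ω, ∏ i ∈ Finset.range 2,
          ν ((fun _ => (0:G)) i) ((fun _ => (0:G)) (i+1) - (fun _ => (0:G)) i) ω ∂P := by
        rw [show (∫ ω, ∏ i ∈ Finset.range 2,
            ν ((fun _ => (0:G)) i) ((fun _ => (0:G)) (i+1) - (fun _ => (0:G)) i) ω ∂P)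
            = ∫ ω, ν 0 0 ω ^ 2 ∂P from by rw [hpeq]]
        rw [integral_pos_iff_support_of_nonneg (fun ω => pow_nonneg (h.nonneg 0 0 ω) 2) hintble,
          hsupp]
        exact hr
      exact event_pos_of_path h (fun _ => (0:G)) rfl (le_refl 2) rfl hpos
    · -- build the initial path from the list l
      set x0 : ℕ → G := fun k => if k = 0 then 0 else r + (l.take (k-1)).sum with hx0def
      have hx00 : x0 0 = 0 := by simp [hx0def]
      have hx01 : x0 1 = r := by simp [hx0def]
      have hlpos : 0 < l.length := List.length_pos_iff.mpr hlne
      have hx0n : x0 (l.length + 1) = 0 := by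
        simp only [hx0def, Nat.add_sub_cancel, if_neg (Nat.succ_ne_zero l.length),
          List.take_length]
        rw [hlsum]; abel
      have h2n0 : 2 ≤ l.length + 1 := by omega
      have hjumps0 : ∀ i < l.length + 1, x0 (i+1) - x0 i ∈ Ejumps P ν := by
        intro i hi
        match i with
        | 0 => simpa [hx0def] using hrE
        | Nat.succ k =>
          have hk : k < l.length := by omega
          have : x0 (k+2) - x0 (k+1) = l[k] := by
            simp only [hx0def, if_neg (Nat.succ_ne_zero (k+1)), if_neg (Nat.succ_ne_zero k),
              Nat.add_sub_cancel]
            rw [show k + 2 - 1 = k + 1 from by omega, List.sum_take_succ l k hk]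
            abel
          rw [this]
          exact hlE _ (List.getElem_mem hk)
      obtain ⟨m, z, hz0, hz1, hzm, h2m, hzjumps, hinj⟩ :=
        erase_loops (P := P) (ν := ν) hr0 (l.length + 1) x0 hx00 hx01 hx0n h2n0 hjumps0
      -- positivity via independence over the (distinct) visited sites
      have hinj' : ∀ i ∈ Finset.range m, ∀ j ∈ Finset.range m, z i = z j → i = j :=
        fun i hi j hj => hinj (Set.mem_Iio.mpr (Finset.mem_range.1 hi))
          (Set.mem_Iio.mpr (Finset.mem_range.1 hj))
      set J : G → G := fun y =>
        if hy : ∃ i, i < m ∧ z i = y then z (Classical.choose hy + 1) - z (Classical.choose hy)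
        else 0 with hJ
      have hJz : ∀ i < m, J (z i) = z (i+1) - z i := by
        intro i him
        have hex : ∃ i', i' < m ∧ z i' = z i := ⟨i, him, rfl⟩
        simp only [hJ, dif_pos hex]
        obtain ⟨h1, h2⟩ := Classical.choose_spec hex
        rw [hinj (Set.mem_Iio.mpr h1) (Set.mem_Iio.mpr him) h2]
      have hJE : ∀ y ∈ (Finset.range m).image z, J y ∈ Ejumps P ν := by
        intro y hy
        obtain ⟨i, hi, rfl⟩ := Finset.mem_image.1 hy
        rw [hJz i (Finset.mem_range.1 hi)]
        exact hzjumps i (Finset.mem_range.1 hi)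
      have hprodeq : ∀ ω, ∏ i ∈ Finset.range m, ν (z i) (z (i+1) - z i) ω
          = ∏ y ∈ (Finset.range m).image z, ν y (J y) ω := by
        intro ω
        rw [Finset.prod_image hinj']
        exact Finset.prod_congr rfl fun i hi => by rw [hJz i (Finset.mem_range.1 hi)]
      have hpos : 0 < ∫ ω, ∏ i ∈ Finset.range m, ν (z i) (z (i+1) - z i) ω ∂P := by
        have heq : ∫ ω, ∏ i ∈ Finset.range m, ν (z i) (z (i+1) - z i) ω ∂P
            = ∏ y ∈ (Finset.range m).image z, ∫ ω, ν y (J y) ω ∂P := by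
          rw [show (fun ω => ∏ i ∈ Finset.range m, ν (z i) (z (i+1) - z i) ω)
              = fun ω => ∏ y ∈ (Finset.range m).image z, ν y (J y) ω from funext hprodeq]
          exact integral_prod_sites h J _
        rw [heq]
        refine Finset.prod_pos fun y hy => ?_
        rw [integral_nu_eq h y (J y)]
        exact (mem_Ejumps_iff_integral_pos h _).1 (hJE y hy)
      have hfin := event_pos_of_path h z hz0 h2m hzm hpos
      rwa [hz1] at hfin
  · intro hP
    have hsub : {ω | X 1 ω = r ∧ ∃ n > 1, X n ω = 0}
        ⊆ ⋃ n : ℕ, {ω | X 1 ω = r ∧ 1 < n ∧ X n ω = 0} := by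
      rintro ω ⟨h1, n, hn, h0⟩
      exact Set.mem_iUnion.2 ⟨n, h1, hn, h0⟩
    obtain ⟨n, hn⟩ : ∃ n, P {ω | X 1 ω = r ∧ 1 < n ∧ X n ω = 0} ≠ 0 := by
      by_contra hc
      push_neg at hc
      exact absurd (measure_mono_null hsub (measure_iUnion_null hc)) hP.ne'
    have hsub2 : {ω | X 1 ω = r ∧ 1 < n ∧ X n ω = 0}
        ⊆ ⋃ v : Fin (n+1) → G, ({ω | X 1 ω = r ∧ 1 < n ∧ X n ω = 0}
            ∩ {ω | ∀ i, ∀ hi : i ≤ n, X i ω = v ⟨i, by omega⟩}) := by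
      intro ω hω
      exact Set.mem_iUnion.2 ⟨fun i => X i.1 ω, hω, fun i hi => rfl⟩
    obtain ⟨v, hv⟩ : ∃ v : Fin (n+1) → G,
        P ({ω | X 1 ω = r ∧ 1 < n ∧ X n ω = 0}
          ∩ {ω | ∀ i, ∀ hi : i ≤ n, X i ω = v ⟨i, by omega⟩}) ≠ 0 := by
      by_contra hc
      push_neg at hc
      exact absurd (measure_mono_null hsub2 (measure_iUnion_null hc)) hn
    obtain ⟨ω₀, hω₀⟩ := nonempty_of_measure_ne_zero hv
    set x : ℕ → G := fun i => X i ω₀ with hx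
    have hx0 : x 0 = 0 := h.start ω₀
    have hx1 : x 1 = r := hω₀.1.1
    have h1n : 1 < n := hω₀.1.2.1
    have hxn : x n = 0 := hω₀.1.2.2
    have hsub3 : ({ω | X 1 ω = r ∧ 1 < n ∧ X n ω = 0}
        ∩ {ω | ∀ i, ∀ hi : i ≤ n, X i ω = v ⟨i, by omega⟩}) ⊆ {ω | ∀ i ≤ n, X i ω = x i} := by
      rintro ω ⟨_, hωv⟩ i hi
      rw [hωv i hi, hx]
      exact (hω₀.2 i hi).symm
    have hApos : 0 < P {ω | ∀ i ≤ n, X i ω = x i} :=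
      lt_of_lt_of_le (pos_iff_ne_zero.mpr hv) (measure_mono hsub3)
    have hintpos : 0 < ∫ ω, ∏ i ∈ Finset.range n, ν (x i) (x (i+1) - x i) ω ∂P := by
      rw [← path_integral h x hx0 n]
      have hi1 : ∫ ω, Set.indicator {ω' | ∀ i ≤ n, X i ω' = x i} (fun _ => (1:ℝ)) ω ∂P
          = (P {ω | ∀ i ≤ n, X i ω = x i}).toReal :=
        integral_indicator_one (measurableSet_path h x n)
      rw [hi1]
      exact ENNReal.toReal_pos hApos.ne' (measure_ne_top P _)
    have hjE : ∀ i < n, x (i+1) - x i ∈ Ejumps P ν := by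
      intro i hi
      by_contra hne
      have hz := nu_ae_zero_of_not_mem h hne (x i)
      have hzero : (fun ω => ∏ j ∈ Finset.range n, ν (x j) (x (j+1) - x j) ω) =ᵐ[P] 0 := by
        filter_upwards [hz] with ω hω
        exact Finset.prod_eq_zero (Finset.mem_range.2 hi) hω
      rw [integral_congr_ae hzero] at hintpos
      simp at hintpos
    refine ⟨hr, List.ofFn (fun k : Fin (n-1) => x (k.1 + 2) - x (k.1 + 1)), ?_, ?_, ?_⟩
    · apply List.ne_nil_of_length_pos
      rw [List.length_ofFn]
      omega
    · intro e he
      obtain ⟨k, hk⟩ := List.mem_ofFn.1 he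
      rw [← hk]
      exact hjE (k.1 + 1) (by omega)
    · have hsum : (List.ofFn fun k : Fin (n-1) => x (k.1+2) - x (k.1+1)).sum
          = ∑ k ∈ Finset.range (n-1), (x (k+2) - x (k+1)) := by
        rw [List.sum_ofFn]
        exact Fin.sum_univ_eq_sum_range (fun k => x (k+2) - x (k+1)) (n-1)
      have htel : ∑ k ∈ Finset.range (n-1), (x (k+2) - x (k+1))
          = x ((n-1)+1) - x (0+1) := Finset.sum_range_sub (fun j => x (j+1)) (n-1)
      have hn1 : n - 1 + 1 = n := by omega
      rw [hsum, htel, hn1, hxn]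
      show r = -(0 - x (0+1))
      rw [show (0:ℕ)+1 = 1 from rfl, hx1]
      abel
end

section
/- A geometric distribution cannot be written as a nondegenerate convex combination of geometric distributions: if p ∈ (0,1] and (p_α) are parameters with Σ_α c_α Geom(p_α) = Geom(p) for a probability vector (c_α) (c_α ≥ 0, Σ c_α = 1), where Geom(q) puts mass q(1−q)^k on k ∈ Z_+, then c_α = 0 whenever p_α ≠ p. -/
open MeasureTheory ProbabilityTheory Filter

/-- a geometric distribution is not a nondegenerate convex combination of
geometric distributions: if `∑ c_α Geom(p_α) = Geom(q)` pointwise, where `Geom(q)` puts mass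
`q(1-q)^k` on `k`, then `c_α = 0` whenever `p_α ≠ q`. -/
theorem geometric_extreme_point {ι : Type*} [Countable ι]
    (c : ι → ℝ) (p : ι → ℝ) (q : ℝ)
    (hc : ∀ α, 0 ≤ c α) (hcsum : ∑' α, c α = 1)
    (hp : ∀ α, p α ∈ Set.Ioc (0 : ℝ) 1) (hq : q ∈ Set.Ioc (0 : ℝ) 1)
    (hmix : ∀ k : ℕ, ∑' α, c α * (p α * (1 - p α) ^ k) = q * (1 - q) ^ k) :
    ∀ α, p α ≠ q → c α = 0 := by
  intro α hne
  have hsc : Summable c := by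
    by_contra h
    simp [tsum_eq_zero_of_not_summable h] at hcsum
  -- summability of the mixed moment terms
  have hsk : ∀ k : ℕ, Summable (fun β => c β * (p β * (1 - p β) ^ k)) := by
    intro k
    apply Summable.of_nonneg_of_le (fun β => ?_) (fun β => ?_) hsc
    · have h1 := (hp β).1; have h2 := (hp β).2
      have : (0:ℝ) ≤ (1 - p β) ^ k := pow_nonneg (by linarith) k
      exact mul_nonneg (hc β) (mul_nonneg (le_of_lt h1) this)
    · have h1 := (hp β).1; have h2 := (hp β).2
      have h3 : (1 - p β) ^ k ≤ 1 := pow_le_one₀ (by linarith) (by linarith)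
      have : p β * (1 - p β) ^ k ≤ 1 := by nlinarith [pow_nonneg (by linarith : (0:ℝ) ≤ 1 - p β) k]
      nlinarith [hc β]
  -- the "variance" terms
  set g : ι → ℝ := fun β => c β * (p β * (p β - q) ^ 2) with hg
  have hgnn : ∀ β, 0 ≤ g β := by
    intro β
    simp only [hg]
    have h1 := (hp β).1
    exact mul_nonneg (hc β) (mul_nonneg (le_of_lt h1) (sq_nonneg _))
  have hgs : Summable g := by
    apply Summable.of_nonneg_of_le hgnn (fun β => ?_) hsc
    have h1 := (hp β).1; have h2 := (hp β).2
    have hq1 := hq.1; have hq2 := hq.2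
    have habs : (p β - q) ^ 2 ≤ 1 := by nlinarith
    simp only [hg]
    have hps : p β * (p β - q) ^ 2 ≤ 1 := by nlinarith [sq_nonneg (p β - q)]
    exact mul_le_of_le_one_right (hc β) hps
  -- identity: g β = (1-q)^2 * a₀ β - 2(1-q) * a₁ β + a₂ β
  have hkey : ∀ β, g β = (1 - q) ^ 2 * (c β * (p β * (1 - p β) ^ 0))
      - 2 * (1 - q) * (c β * (p β * (1 - p β) ^ 1)) + (c β * (p β * (1 - p β) ^ 2)) := by
    intro β; simp only [hg]; ring
  have htsum : ∑' β, g β = 0 := by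
    calc ∑' β, g β
        = ∑' β, ((1 - q) ^ 2 * (c β * (p β * (1 - p β) ^ 0))
            - 2 * (1 - q) * (c β * (p β * (1 - p β) ^ 1)) + (c β * (p β * (1 - p β) ^ 2))) := by
          exact tsum_congr hkey
      _ = ((1 - q) ^ 2 * ∑' β, (c β * (p β * (1 - p β) ^ 0)))
            - 2 * (1 - q) * (∑' β, (c β * (p β * (1 - p β) ^ 1)))
            + ∑' β, (c β * (p β * (1 - p β) ^ 2)) := by
          rw [Summable.tsum_add (Summable.sub ((hsk 0).mul_left _) ((hsk 1).mul_left _)) (hsk 2),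
            Summable.tsum_sub ((hsk 0).mul_left _) ((hsk 1).mul_left _), tsum_mul_left, tsum_mul_left]
      _ = 0 := by rw [hmix 0, hmix 1, hmix 2]; ring
  have hle : g α ≤ 0 := htsum ▸ Summable.le_tsum hgs α (fun b _ => hgnn b)
  have hzero : g α = 0 := le_antisymm hle (hgnn α)
  have h1 := (hp α).1
  have hsq : 0 < (p α - q) ^ 2 := pow_two_pos_of_ne_zero (sub_ne_zero.mpr hne)
  by_contra hca
  have hcpos : 0 < c α := lt_of_le_of_ne (hc α) (Ne.symm hca)
  have : 0 < g α := by
    simp only [hg]; exact mul_pos hcpos (mul_pos h1 hsq)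
  linarith
end

section
/- For a random walk in an iid random environment on a countable abelian group, the random set {X_{n+1} − X_n : n ≥ 0} of jumps actually performed by the walk equals P^μ-almost surely the set E = {g ∈ G : P(ν_g > 0) > 0}, provided the set of visited sites is almost surely infinite. -/
open MeasureTheory ProbabilityTheory Filter

section Aux

open MeasureTheory ProbabilityTheory Filter Set

variable {G Ω : Type*} [AddCommGroup G] [Countable G]
    [MeasurableSpace G] [MeasurableSingletonClass G] [DecidableEq G] [mΩ : MeasurableSpace Ω]
    {P : Measure Ω} [IsProbabilityMeasure P] {ν : G → G → Ω → ℝ} {X : ℕ → Ω → G}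

lemma measG (s : Set G) : MeasurableSet s := (Set.to_countable s).measurableSet

lemma measurable_nuPi (h : IsRWRE P ν X) (x : G) : Measurable (fun ω (e : G) => ν x e ω) :=
  measurable_pi_lambda _ fun e => h.meas_nu x e

lemma envSigma_le (h : IsRWRE P ν X) : envSigma ν ≤ mΩ :=
  iSup_le fun x => (measurable_nuPi h x).comap_le

lemma nu_env_meas (h : IsRWRE P ν X) (x e : G) : Measurable[envSigma ν] (ν x e) := by
  have h1 : Measurable[MeasurableSpace.comap (fun ω (e : G) => ν x e ω) inferInstance]
      (fun ω (e : G) => ν x e ω) := measurable_iff_comap_le.mpr le_rfl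
  have h2 : Measurable[MeasurableSpace.comap (fun ω (e : G) => ν x e ω) inferInstance]
      (ν x e) := (measurable_pi_apply e).comp h1
  exact h2.mono (le_iSup (fun x => MeasurableSpace.comap (fun ω (e : G) => ν x e ω)
    inferInstance) x) le_rfl

lemma comap_le_natFilt {i n : ℕ} (hi : i ≤ n) :
    MeasurableSpace.comap (X i) inferInstance ≤ natFilt X n :=
  le_iSup₂ (f := fun j (_ : j ∈ Set.Iic n) => MeasurableSpace.comap (X j) inferInstance) i hi

lemma natFilt_le (h : IsRWRE P ν X) (n : ℕ) : natFilt X n ≤ mΩ :=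
  iSup_le fun i => iSup_le fun _ => (h.meas_X i).comap_le

lemma natFilt_mono : Monotone (natFilt X) := fun a b hab =>
  iSup_le fun i => iSup_le fun hi => comap_le_natFilt (le_trans hi hab)

lemma measSet_natFilt {i n : ℕ} (hi : i ≤ n) (s : Set G) :
    MeasurableSet[natFilt X n] (X i ⁻¹' s) :=
  comap_le_natFilt hi _ ⟨s, measG s, rfl⟩

lemma nu_nonneg (h : IsRWRE P ν X) (x e : G) (ω : Ω) : 0 ≤ ν x e ω := h.nonneg x e ω

lemma nu_le_one (h : IsRWRE P ν X) (x e : G) (ω : Ω) : ν x e ω ≤ 1 :=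
  le_hasSum (h.sum_one x ω) e fun b _ => h.nonneg x b ω

lemma integrable_of_bdd {f : Ω → ℝ} (hf : AEStronglyMeasurable f P) {C : ℝ}
    (hb : ∀ ω, |f ω| ≤ C) : Integrable f P :=
  Integrable.mono' (integrable_const C) hf (Filter.Eventually.of_forall hb)

end Aux
section Aux2
set_option linter.unusedSectionVars false
set_option linter.unusedVariables false

open MeasureTheory ProbabilityTheory Filter Set

variable {G Ω : Type*} [AddCommGroup G] [Countable G]
    [MeasurableSpace G] [MeasurableSingletonClass G] [DecidableEq G] [mΩ : MeasurableSpace Ω]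
    {P : Measure Ω} [IsProbabilityMeasure P] {ν : G → G → Ω → ℝ} {X : ℕ → Ω → G}

lemma step_integral (h : IsRWRE P ν X) (n : ℕ) (x e : G) {S : Set Ω}
    (hS : MeasurableSet[envSigma ν ⊔ natFilt X n] S) (hSx : S ⊆ {ω | X n ω = x})
    {f : Ω → ℝ} (hf : Measurable[envSigma ν] f) {C : ℝ} (hfb : ∀ ω, |f ω| ≤ C) :
    ∫ ω, S.indicator f ω * Set.indicator {ω' | X (n+1) ω' = x + e} (fun _ => (1:ℝ)) ω ∂P
      = ∫ ω, S.indicator f ω * ν x e ω ∂P := by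
  have hm : envSigma ν ⊔ natFilt X n ≤ mΩ := sup_le (envSigma_le h) (natFilt_le h n)
  set A : Set Ω := {ω' | X (n+1) ω' = x + e} with hA
  have hAmeas : MeasurableSet A := (h.meas_X (n+1)) (measG {x + e})
  have hu_meas_m : Measurable[envSigma ν ⊔ natFilt X n] (S.indicator f) :=
    Measurable.indicator (hf.mono le_sup_left le_rfl) hS
  have hu_meas : Measurable (S.indicator f) := hu_meas_m.mono hm le_rfl
  have hub : ∀ ω, |S.indicator f ω| ≤ |C| := by
    intro ω
    by_cases hω : ω ∈ S
    · rw [Set.indicator_of_mem hω]; exact (hfb ω).trans (le_abs_self C)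
    · rw [Set.indicator_of_notMem hω]; simp
  have hg_meas : Measurable (A.indicator (fun _ => (1:ℝ))) :=
    (measurable_const).indicator hAmeas
  have hg_int : Integrable (A.indicator (fun _ => (1:ℝ))) P :=
    integrable_of_bdd hg_meas.aestronglyMeasurable (C := 1) (by
      intro ω; by_cases hω : ω ∈ A
      · rw [Set.indicator_of_mem hω]; simp
      · rw [Set.indicator_of_notMem hω]; simp)
  have hfg_int : Integrable (S.indicator f * A.indicator (fun _ => (1:ℝ))) P := by
    refine integrable_of_bdd (hu_meas.mul hg_meas).aestronglyMeasurable (C := |C|) ?_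
    intro ω
    rw [Pi.mul_apply, abs_mul]
    by_cases hω : ω ∈ A
    · rw [Set.indicator_of_mem hω]; simpa using hub ω
    · rw [Set.indicator_of_notMem hω]; simpa using abs_nonneg C
  have step1 : ∫ ω, S.indicator f ω * A.indicator (fun _ => (1:ℝ)) ω ∂P
      = ∫ ω, (S.indicator f ω) * (P[A.indicator (fun _ => (1:ℝ))|envSigma ν ⊔ natFilt X n]) ω ∂P := by
    have h1 := integral_condExp hm (f := S.indicator f * A.indicator (fun _ => (1:ℝ))) (μ := P)
    have h2 := condExp_mul_of_stronglyMeasurable_left (μ := P) hu_meas_m.stronglyMeasurable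
      hfg_int hg_int
    calc ∫ ω, S.indicator f ω * A.indicator (fun _ => (1:ℝ)) ω ∂P
        = ∫ ω, (P[S.indicator f * A.indicator (fun _ => (1:ℝ))|envSigma ν ⊔ natFilt X n]) ω ∂P := h1.symm
      _ = ∫ ω, (S.indicator f ω) * (P[A.indicator (fun _ => (1:ℝ))|envSigma ν ⊔ natFilt X n]) ω ∂P :=
          integral_congr_ae (h2.mono fun ω hω => hω)
  rw [step1]
  refine integral_congr_ae ?_
  filter_upwards [h.quenched n x e] with ω hω
  by_cases hωS : ω ∈ S
  · rw [hω (hSx hωS)]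
  · rw [Set.indicator_of_notMem hωS, zero_mul, zero_mul]

end Aux2
section Aux3
set_option linter.unusedSectionVars false
set_option linter.unusedVariables false

open MeasureTheory ProbabilityTheory Filter Set

variable {G Ω : Type*} [AddCommGroup G] [Countable G]
    [MeasurableSpace G] [MeasurableSingletonClass G] [DecidableEq G] [mΩ : MeasurableSpace Ω]
    {P : Measure Ω} [IsProbabilityMeasure P] {ν : G → G → Ω → ℝ} {X : ℕ → Ω → G}

/-- Trajectory event: the walk follows `xs` up to time `n`. -/
def trajSet (X : ℕ → Ω → G) (xs : ℕ → G) (n : ℕ) : Set Ω := {ω | ∀ i ≤ n, X i ω = xs i}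

/-- Product of transition probabilities along the trajectory `xs`. -/
def prodNu (ν : G → G → Ω → ℝ) (xs : ℕ → G) (n : ℕ) (ω : Ω) : ℝ :=
  ∏ i ∈ Finset.range n, ν (xs i) (xs (i+1) - xs i) ω

lemma trajSet_measurable (xs : ℕ → G) (n : ℕ) :
    MeasurableSet[natFilt X n] (trajSet X xs n) := by
  have : trajSet X xs n = ⋂ i, ⋂ (_ : i ≤ n), X i ⁻¹' {xs i} := by
    ext ω; simp [trajSet, Set.mem_iInter]
  rw [this]
  exact MeasurableSet.iInter fun i => MeasurableSet.iInter fun hi => measSet_natFilt hi {xs i}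

lemma trajSet_succ (xs : ℕ → G) (n : ℕ) :
    trajSet X xs (n+1) = trajSet X xs n ∩ {ω | X (n+1) ω = xs (n+1)} := by
  ext ω
  simp only [trajSet, Set.mem_setOf_eq, Set.mem_inter_iff]
  constructor
  · intro hω; exact ⟨fun i hi => hω i (hi.trans (Nat.le_succ n)), hω (n+1) le_rfl⟩
  · rintro ⟨h1, h2⟩ i hi
    rcases Nat.le_succ_iff.mp hi with hi' | hi'
    · exact h1 i hi'
    · rw [hi']; exact h2

lemma prodNu_meas_env (h : IsRWRE P ν X) (xs : ℕ → G) (n : ℕ) :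
    Measurable[envSigma ν] (prodNu ν xs n) := by
  unfold prodNu
  exact Finset.measurable_prod _ fun i _ => nu_env_meas h _ _

lemma prodNu_nonneg (h : IsRWRE P ν X) (xs : ℕ → G) (n : ℕ) (ω : Ω) :
    0 ≤ prodNu ν xs n ω :=
  Finset.prod_nonneg fun i _ => h.nonneg _ _ ω

lemma prodNu_le_one (h : IsRWRE P ν X) (xs : ℕ → G) (n : ℕ) (ω : Ω) :
    prodNu ν xs n ω ≤ 1 :=
  Finset.prod_le_one (fun i _ => h.nonneg _ _ ω) (fun i _ => nu_le_one h _ _ ω)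

lemma integral_indicator_one' {s : Set Ω} (hs : MeasurableSet s) :
    ∫ ω, s.indicator (fun _ => (1:ℝ)) ω ∂P = (P s).toReal := by
  rw [integral_indicator_const (1:ℝ) hs, smul_eq_mul, mul_one, measureReal_def]

lemma traj_integral (h : IsRWRE P ν X) (xs : ℕ → G) (n : ℕ) {f : Ω → ℝ}
    (hf : Measurable[envSigma ν] f) {C : ℝ} (hfb : ∀ ω, |f ω| ≤ C) :
    ∫ ω, (trajSet X xs n).indicator f ω ∂P
      = ∫ ω, ({ω' | X 0 ω' = xs 0}).indicator (fun ω' => f ω' * prodNu ν xs n ω') ω ∂P := by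
  induction n generalizing f C with
  | zero =>
    have h1 : trajSet X xs 0 = {ω' | X 0 ω' = xs 0} := by
      ext ω; simp [trajSet, Nat.le_zero]
    rw [h1]
    refine integral_congr_ae (Filter.Eventually.of_forall fun ω => ?_)
    by_cases hω : ω ∈ {ω' | X 0 ω' = xs 0}
    · rw [Set.indicator_of_mem hω, Set.indicator_of_mem hω]
      simp [prodNu]
    · rw [Set.indicator_of_notMem hω, Set.indicator_of_notMem hω]
  | succ n ih =>
    have e1 : ∀ ω, (trajSet X xs (n+1)).indicator f ω
        = (trajSet X xs n).indicator f ω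
          * Set.indicator {ω' | X (n+1) ω' = xs n + (xs (n+1) - xs n)} (fun _ => (1:ℝ)) ω := by
      intro ω
      have hset : {ω' | X (n+1) ω' = xs n + (xs (n+1) - xs n)} = {ω' | X (n+1) ω' = xs (n+1)} := by
        simp [add_sub_cancel]
      rw [hset, trajSet_succ]
      by_cases h1 : ω ∈ trajSet X xs n <;> by_cases h2 : ω ∈ {ω' | X (n+1) ω' = xs (n+1)} <;>
        simp [Set.indicator_of_mem, Set.indicator_of_notMem, h1, h2, Set.mem_inter_iff]
    have e2 : ∫ ω, (trajSet X xs (n+1)).indicator f ω ∂P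
        = ∫ ω, (trajSet X xs n).indicator f ω * ν (xs n) (xs (n+1) - xs n) ω ∂P := by
      rw [integral_congr_ae (Filter.Eventually.of_forall e1)]
      exact step_integral h n (xs n) (xs (n+1) - xs n)
        ((le_sup_right : natFilt X n ≤ envSigma ν ⊔ natFilt X n) _ (trajSet_measurable xs n))
        (fun ω (hω : ω ∈ trajSet X xs n) => hω n le_rfl) hf hfb
    rw [e2]
    have e3 : ∀ ω, (trajSet X xs n).indicator f ω * ν (xs n) (xs (n+1) - xs n) ω
        = (trajSet X xs n).indicator (fun ω' => f ω' * ν (xs n) (xs (n+1) - xs n) ω') ω := by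
      intro ω
      by_cases h1 : ω ∈ trajSet X xs n <;>
        simp [Set.indicator_of_mem, Set.indicator_of_notMem, h1]
    rw [integral_congr_ae (Filter.Eventually.of_forall e3)]
    have hf' : Measurable[envSigma ν] (fun ω' => f ω' * ν (xs n) (xs (n+1) - xs n) ω') :=
      hf.mul (nu_env_meas h _ _)
    have hfb' : ∀ ω, |f ω * ν (xs n) (xs (n+1) - xs n) ω| ≤ C := by
      intro ω
      rw [abs_mul]
      calc |f ω| * |ν (xs n) (xs (n+1) - xs n) ω| ≤ |f ω| * 1 := by
            refine mul_le_mul_of_nonneg_left ?_ (abs_nonneg _)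
            rw [abs_of_nonneg (h.nonneg _ _ ω)]
            exact nu_le_one h _ _ ω
        _ = |f ω| := mul_one _
        _ ≤ C := hfb ω
    rw [ih hf' hfb']
    refine integral_congr_ae (Filter.Eventually.of_forall fun ω => ?_)
    by_cases hω : ω ∈ {ω' | X 0 ω' = xs 0}
    · rw [Set.indicator_of_mem hω, Set.indicator_of_mem hω]
      unfold prodNu
      rw [Finset.prod_range_succ]
      ring
    · rw [Set.indicator_of_notMem hω, Set.indicator_of_notMem hω]

end Aux3
section Aux4
set_option linter.unusedSectionVars false
set_option linter.unusedVariables false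

open MeasureTheory ProbabilityTheory Filter Set

variable {G Ω : Type*} [AddCommGroup G] [Countable G]
    [MeasurableSpace G] [MeasurableSingletonClass G] [DecidableEq G] [mΩ : MeasurableSpace Ω]
    {P : Measure Ω} [IsProbabilityMeasure P] {ν : G → G → Ω → ℝ} {X : ℕ → Ω → G}

lemma integral_nu_eq (h : IsRWRE P ν X) (x g : G) :
    ∫ ω, ν x g ω ∂P = ∫ ω, ν 0 g ω ∂P := by
  have hx : ∫ ω, ν x g ω ∂P = ∫ π, π g ∂(Measure.map (fun ω (e : G) => ν x e ω) P) :=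
    (integral_map (measurable_nuPi h x).aemeasurable
      (measurable_pi_apply g).aestronglyMeasurable).symm
  have h0 : ∫ ω, ν 0 g ω ∂P = ∫ π, π g ∂(Measure.map (fun ω (e : G) => ν 0 e ω) P) :=
    (integral_map (measurable_nuPi h 0).aemeasurable
      (measurable_pi_apply g).aestronglyMeasurable).symm
  rw [hx, h0, h.ident_sites x]

lemma indep_factor (h : IsRWRE P ν X) (n : ℕ) (xs : ℕ → G) (x g : G)
    (hx : ∀ i < n, xs i ≠ x) :
    ∫ ω, ν x g ω * prodNu ν xs n ω ∂P
      = (∫ ω, ν x g ω ∂P) * ∫ ω, prodNu ν xs n ω ∂P := by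
  classical
  set T : Finset G := (Finset.range n).image xs with hT
  have hdisj : Disjoint ({x} : Finset G) T := by
    rw [Finset.disjoint_singleton_left, hT]
    simp only [Finset.mem_image, Finset.mem_range, not_exists, not_and]
    intro i hi
    exact hx i hi
  have hmeas : ∀ y : G, Measurable ((fun z ω (e : G) => ν z e ω) y) :=
    fun y => measurable_nuPi h y
  have hIF := h.indep_sites.indepFun_finset {x} T hdisj.symm.symm hmeas
  set φ1 : (({x} : Finset G) → (G → ℝ)) → ℝ :=
    fun v => v ⟨x, Finset.mem_singleton_self x⟩ g with hφ1def
  have hφ1 : Measurable φ1 := (measurable_pi_apply g).comp (measurable_pi_apply _)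
  set φ2 : ({y // y ∈ T} → (G → ℝ)) → ℝ :=
    fun v => ∏ i ∈ (Finset.range n).attach,
      v ⟨xs i, Finset.mem_image_of_mem xs i.2⟩ (xs (↑i + 1) - xs ↑i) with hφ2def
  have hφ2 : Measurable φ2 :=
    Finset.measurable_prod _ fun i _ => (measurable_pi_apply _).comp (measurable_pi_apply _)
  have hcomp := hIF.comp hφ1 hφ2
  have hF1 : Measurable (fun a (i : {y // y ∈ ({x} : Finset G)}) =>
      (fun z ω' (e : G) => ν z e ω') ↑i a) :=
    measurable_pi_lambda _ fun i => hmeas ↑i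
  have hF2 : Measurable (fun a (i : {y // y ∈ T}) => (fun z ω' (e : G) => ν z e ω') ↑i a) :=
    measurable_pi_lambda _ fun i => hmeas ↑i
  have hmul := IndepFun.integral_fun_mul_eq_mul_integral hcomp (hφ1.comp hF1).aestronglyMeasurable
    (hφ2.comp hF2).aestronglyMeasurable
  have e1 : ∀ ω : Ω, φ1 ((fun a (i : {y // y ∈ ({x} : Finset G)}) =>
      (fun z ω' (e : G) => ν z e ω') ↑i a) ω) = ν x g ω := fun ω => rfl
  have e2 : ∀ ω : Ω, φ2 ((fun a (i : {y // y ∈ T}) =>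
      (fun z ω' (e : G) => ν z e ω') ↑i a) ω) = prodNu ν xs n ω := by
    intro ω
    show (∏ i ∈ (Finset.range n).attach, ν (xs ↑i) (xs (↑i + 1) - xs ↑i) ω) = prodNu ν xs n ω
    unfold prodNu
    exact Finset.prod_attach (Finset.range n) (fun j => ν (xs j) (xs (j+1) - xs j) ω)
  have i1 : integral P (φ1 ∘ (fun a (i : {y // y ∈ ({x} : Finset G)}) =>
      (fun z ω' (e : G) => ν z e ω') ↑i a)) = ∫ ω, ν x g ω ∂P :=
    integral_congr_ae (Filter.Eventually.of_forall e1)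
  have i2 : integral P (φ2 ∘ (fun a (i : {y // y ∈ T}) =>
      (fun z ω' (e : G) => ν z e ω') ↑i a)) = ∫ ω, prodNu ν xs n ω ∂P :=
    integral_congr_ae (Filter.Eventually.of_forall e2)
  calc ∫ ω, ν x g ω * prodNu ν xs n ω ∂P
      = ∫ ω, (φ1 ∘ (fun a (i : {y // y ∈ ({x} : Finset G)}) =>
          (fun z ω' (e : G) => ν z e ω') ↑i a)) ω
          * (φ2 ∘ (fun a (i : {y // y ∈ T}) => (fun z ω' (e : G) => ν z e ω') ↑i a)) ω ∂P :=
        integral_congr_ae (Filter.Eventually.of_forall fun ω => by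
          simp only [Function.comp_apply]; rw [e1 ω, e2 ω])
    _ = (∫ ω, ν x g ω ∂P) * ∫ ω, prodNu ν xs n ω ∂P := by rw [← i1, ← i2]; exact hmul
lemma key_measure (h : IsRWRE P ν X) (g : G) (n : ℕ) (xs : ℕ → G)
    (hfresh : ∀ i < n, xs i ≠ xs n) :
    P (trajSet X xs n ∩ {ω | X (n+1) ω = xs n + g})
      = ENNReal.ofReal (∫ ω, ν 0 g ω ∂P) * P (trajSet X xs n) := by
  classical
  by_cases h0 : xs 0 = 0
  swap
  · have hempty : trajSet X xs n = ∅ := by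
      ext ω
      simp only [trajSet, Set.mem_setOf_eq, Set.mem_empty_iff_false, iff_false]
      intro hω
      exact h0 ((hω 0 (Nat.zero_le n)).symm.trans (by rw [h.start ω]) |>.symm ▸ rfl)
    simp [hempty]
  · set xs' : ℕ → G := Function.update xs (n+1) (xs n + g) with hxs'
    have hxs'le : ∀ i, i ≤ n → xs' i = xs i := by
      intro i hi
      exact Function.update_of_ne (by omega) _ _
    have e0 : trajSet X xs' n = trajSet X xs n := by
      ext ω
      simp only [trajSet, Set.mem_setOf_eq]
      constructor <;> intro hω i hi
      · rw [← hxs'le i hi]; exact hω i hi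
      · rw [hxs'le i hi]; exact hω i hi
    have eA : trajSet X xs' (n+1) = trajSet X xs n ∩ {ω | X (n+1) ω = xs n + g} := by
      rw [trajSet_succ, e0]
      congr 1
      have hupd : xs' (n+1) = xs n + g := by rw [hxs']; exact Function.update_self _ _ _
      rw [hupd]
    have huniv : {ω' | X 0 ω' = xs' 0} = (Set.univ : Set Ω) := by
      ext ω
      simp [h.start ω, hxs'le 0 (Nat.zero_le n), h0]
    have huniv2 : {ω' | X 0 ω' = xs 0} = (Set.univ : Set Ω) := by
      ext ω
      simp [h.start ω, h0]
    have hone : Measurable[envSigma ν] (fun _ : Ω => (1:ℝ)) := measurable_const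
    have honeb : ∀ ω : Ω, |(1:ℝ)| ≤ 1 := fun ω => by simp
    have htraj_meas : ∀ (ys : ℕ → G) (m : ℕ), MeasurableSet (trajSet X ys m) := fun ys m =>
      natFilt_le h m _ (trajSet_measurable ys m)
    -- P(traj n) as integral
    have m2 : (P (trajSet X xs n)).toReal = ∫ ω, prodNu ν xs n ω ∂P := by
      rw [← integral_indicator_one' (htraj_meas xs n), traj_integral h xs n hone honeb]
      rw [huniv2]
      simp [Set.indicator_univ]
    -- P(traj n ∩ A) as integral
    have m1 : (P (trajSet X xs n ∩ {ω | X (n+1) ω = xs n + g})).toReal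
        = ∫ ω, ν (xs n) g ω * prodNu ν xs n ω ∂P := by
      rw [← eA, ← integral_indicator_one' (htraj_meas xs' (n+1)),
        traj_integral h xs' (n+1) hone honeb, huniv]
      simp only [Set.indicator_univ, one_mul]
      refine integral_congr_ae (Filter.Eventually.of_forall fun ω => ?_)
      unfold prodNu
      rw [Finset.prod_range_succ]
      have hupd : xs' (n+1) = xs n + g := by rw [hxs']; exact Function.update_self _ _ _
      have hlast : ν (xs' n) (xs' (n+1) - xs' n) ω = ν (xs n) g ω := by
        rw [hxs'le n le_rfl, hupd, add_sub_cancel_left]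
      rw [hlast]
      have hrest : ∀ i ∈ Finset.range n,
          ν (xs' i) (xs' (i+1) - xs' i) ω = ν (xs i) (xs (i+1) - xs i) ω := by
        intro i hi
        rw [Finset.mem_range] at hi
        rw [hxs'le i (le_of_lt hi), hxs'le (i+1) hi]
      rw [Finset.prod_congr rfl hrest]
      ring
    have hc : (0:ℝ) ≤ ∫ ω, ν 0 g ω ∂P := integral_nonneg fun ω => h.nonneg 0 g ω
    have key : (P (trajSet X xs n ∩ {ω | X (n+1) ω = xs n + g})).toReal
        = (∫ ω, ν 0 g ω ∂P) * (P (trajSet X xs n)).toReal := by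
      rw [m1, m2, indep_factor h n xs (xs n) g hfresh, integral_nu_eq h (xs n) g]
    calc P (trajSet X xs n ∩ {ω | X (n+1) ω = xs n + g})
        = ENNReal.ofReal ((P (trajSet X xs n ∩ {ω | X (n+1) ω = xs n + g})).toReal) :=
          (ENNReal.ofReal_toReal (measure_ne_top P _)).symm
      _ = ENNReal.ofReal ((∫ ω, ν 0 g ω ∂P) * (P (trajSet X xs n)).toReal) := by rw [key]
      _ = ENNReal.ofReal (∫ ω, ν 0 g ω ∂P) * ENNReal.ofReal ((P (trajSet X xs n)).toReal) :=
          ENNReal.ofReal_mul hc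
      _ = ENNReal.ofReal (∫ ω, ν 0 g ω ∂P) * P (trajSet X xs n) := by
          rw [ENNReal.ofReal_toReal (measure_ne_top P _)]

end Aux4
section Aux5
set_option linter.unusedSectionVars false
set_option linter.unusedVariables false

open MeasureTheory ProbabilityTheory Filter Set

variable {G Ω : Type*} [AddCommGroup G] [Countable G]
    [MeasurableSpace G] [MeasurableSingletonClass G] [DecidableEq G] [mΩ : MeasurableSpace Ω]
    {P : Measure Ω} [IsProbabilityMeasure P] {ν : G → G → Ω → ℝ} {X : ℕ → Ω → G}

/-- The event that time `n` is a fresh time (site never visited before). -/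
def freshSet (X : ℕ → Ω → G) (n : ℕ) : Set Ω := {ω | ∀ i < n, X i ω ≠ X n ω}

lemma eqSet_natFilt {i n : ℕ} (hi : i ≤ n) :
    MeasurableSet[natFilt X n] {ω | X i ω = X n ω} := by
  have he : {ω | X i ω = X n ω} = ⋃ y : G, (X i ⁻¹' {y} ∩ X n ⁻¹' {y}) := by
    ext ω
    simp only [Set.mem_setOf_eq, Set.mem_iUnion, Set.mem_inter_iff, Set.mem_preimage,
      Set.mem_singleton_iff]
    exact ⟨fun hxy => ⟨X n ω, hxy, rfl⟩, fun ⟨y, h1, h2⟩ => h1.trans h2.symm⟩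
  rw [he]
  exact MeasurableSet.iUnion fun y => (measSet_natFilt hi {y}).inter (measSet_natFilt le_rfl {y})

lemma freshSet_meas (n : ℕ) : MeasurableSet[natFilt X n] (freshSet X n) := by
  have he : freshSet X n = ⋂ i, ⋂ (_ : i < n), {ω | X i ω = X n ω}ᶜ := by
    ext ω; simp [freshSet]
  rw [he]
  exact MeasurableSet.iInter fun i => MeasurableSet.iInter fun hi =>
    (eqSet_natFilt (le_of_lt hi)).compl

lemma jumpA_meas (g : G) (n : ℕ) :
    MeasurableSet[natFilt X (n+1)] {ω | X (n+1) ω = X n ω + g} := by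
  have he : {ω | X (n+1) ω = X n ω + g} = ⋃ y : G, (X n ⁻¹' {y} ∩ X (n+1) ⁻¹' {y + g}) := by
    ext ω
    simp only [Set.mem_setOf_eq, Set.mem_iUnion, Set.mem_inter_iff, Set.mem_preimage,
      Set.mem_singleton_iff]
    exact ⟨fun hxy => ⟨X n ω, rfl, hxy⟩, fun ⟨y, h1, h2⟩ => by rw [h1]; exact h2⟩
  rw [he]
  exact MeasurableSet.iUnion fun y =>
    (measSet_natFilt (Nat.le_succ n) {y}).inter (measSet_natFilt le_rfl {y + g})

lemma natFilt_le_comapY (n : ℕ) :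
    natFilt X n ≤ MeasurableSpace.comap (fun ω (i : Fin (n+1)) => X i ω) ⊤ := by
  refine iSup_le fun i => iSup_le fun hi => ?_
  rintro s ⟨t, -, rfl⟩
  exact ⟨(fun u : Fin (n+1) → G => u ⟨i, Nat.lt_succ_of_le hi⟩) ⁻¹' t, trivial, rfl⟩

/-- Extension of a finite trajectory to `ℕ`. -/
def extFin {G : Type*} [AddCommGroup G] (n : ℕ) (u : Fin (n+1) → G) : ℕ → G :=
  fun i => if hi : i < n+1 then u ⟨i, hi⟩ else 0

lemma fiber_eq_trajSet (n : ℕ) (u : Fin (n+1) → G) :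
    (fun ω (i : Fin (n+1)) => X i ω) ⁻¹' {u} = trajSet X (extFin n u) n := by
  ext ω
  simp only [Set.mem_preimage, Set.mem_singleton_iff, trajSet, Set.mem_setOf_eq]
  constructor
  · intro hω i hi
    have : extFin n u i = u ⟨i, Nat.lt_succ_of_le hi⟩ := dif_pos _
    rw [this, ← hω]
  · intro hω
    funext i
    have h1 := hω i.1 (Nat.lt_succ_iff.mp i.2)
    have h2 : extFin n u i.1 = u i := by
      rw [extFin, dif_pos i.2]
    rw [← h2, ← h1]

lemma measure_A_fresh (h : IsRWRE P ν X) (g : G) (n : ℕ) {B : Set Ω}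
    (hB : MeasurableSet[natFilt X n] B) :
    P ({ω | X (n+1) ω = X n ω + g} ∩ (freshSet X n ∩ B))
      = ENNReal.ofReal (∫ ω, ν 0 g ω ∂P) * P (freshSet X n ∩ B) := by
  classical
  set Y : Ω → (Fin (n+1) → G) := fun ω i => X i ω with hY
  obtain ⟨U, -, hU⟩ := natFilt_le_comapY (X := X) n B hB
  set V : Set (Fin (n+1) → G) :=
    {u | u ∈ U ∧ ∀ i : Fin (n+1), (i : ℕ) < n → u i ≠ u (Fin.last n)} with hV
  have hfB : freshSet X n ∩ B = Y ⁻¹' V := by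
    ext ω
    simp only [Set.mem_inter_iff, Set.mem_preimage, hV, Set.mem_setOf_eq, freshSet]
    constructor
    · rintro ⟨h1, h2⟩
      refine ⟨by rw [← hU] at h2; exact h2, fun i hi => ?_⟩
      exact h1 i.1 hi
    · rintro ⟨h1, h2⟩
      refine ⟨fun i hi => h2 ⟨i, hi.trans (Nat.lt_succ_self n)⟩ hi, ?_⟩
      rw [← hU]; exact h1
  have hfib_meas : ∀ u : Fin (n+1) → G, MeasurableSet (Y ⁻¹' {u}) := by
    intro u
    rw [fiber_eq_trajSet]
    exact natFilt_le h n _ (trajSet_measurable _ n)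
  have hAmeas : MeasurableSet {ω | X (n+1) ω = X n ω + g} :=
    natFilt_le h (n+1) _ (jumpA_meas g n)
  -- decompose
  have hdecomp1 : Y ⁻¹' V = ⋃ u : V, Y ⁻¹' {(u : Fin (n+1) → G)} := by
    ext ω
    simp only [Set.mem_preimage, Set.mem_iUnion, Set.mem_singleton_iff]
    exact ⟨fun hω => ⟨⟨Y ω, hω⟩, rfl⟩, by rintro ⟨⟨u, hu⟩, rfl⟩; exact hu⟩
  have hdisj : Pairwise (Function.onFun Disjoint fun u : V => Y ⁻¹' {(u : Fin (n+1) → G)}) := by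
    intro u v huv
    refine Set.disjoint_left.mpr fun ω h1 h2 => ?_
    apply huv
    ext1
    rw [← h1, ← h2]
  have hsum1 : P (Y ⁻¹' V) = ∑' u : V, P (Y ⁻¹' {(u : Fin (n+1) → G)}) := by
    rw [hdecomp1, measure_iUnion hdisj fun u => hfib_meas u]
  have hdecomp2 : {ω | X (n+1) ω = X n ω + g} ∩ Y ⁻¹' V
      = ⋃ u : V, ({ω | X (n+1) ω = X n ω + g} ∩ Y ⁻¹' {(u : Fin (n+1) → G)}) := by
    rw [hdecomp1, Set.inter_iUnion]
  have hsum2 : P ({ω | X (n+1) ω = X n ω + g} ∩ Y ⁻¹' V)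
      = ∑' u : V, P ({ω | X (n+1) ω = X n ω + g} ∩ Y ⁻¹' {(u : Fin (n+1) → G)}) := by
    rw [hdecomp2, measure_iUnion (fun u v huv => Set.disjoint_left.mpr
      fun ω h1 h2 => Set.disjoint_left.mp (hdisj huv) h1.2 h2.2)
      (fun u => hAmeas.inter (hfib_meas u))]
  -- per-fiber identity
  have hfiber : ∀ u : V, P ({ω | X (n+1) ω = X n ω + g} ∩ Y ⁻¹' {(u : Fin (n+1) → G)})
      = ENNReal.ofReal (∫ ω, ν 0 g ω ∂P) * P (Y ⁻¹' {(u : Fin (n+1) → G)}) := by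
    rintro ⟨u, huU, hufresh⟩
    have hxs := fiber_eq_trajSet (X := X) n u
    have hxn : extFin n u n = u (Fin.last n) := by
      rw [extFin, dif_pos (Nat.lt_succ_self n)]
      rfl
    have hAinter : {ω | X (n+1) ω = X n ω + g} ∩ Y ⁻¹' {u}
        = trajSet X (extFin n u) n ∩ {ω | X (n+1) ω = extFin n u n + g} := by
      rw [hxs]
      ext ω
      simp only [Set.mem_inter_iff, Set.mem_setOf_eq]
      constructor
      · rintro ⟨h1, h2⟩
        exact ⟨h2, by rw [h1, h2 n le_rfl]⟩
      · rintro ⟨h1, h2⟩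
        exact ⟨by rw [h2, h1 n le_rfl], h1⟩
    rw [hAinter, hxs]
    refine key_measure h g n (extFin n u) fun i hi => ?_
    have h1 : extFin n u i = u ⟨i, hi.trans (Nat.lt_succ_self n)⟩ :=
      dif_pos (hi.trans (Nat.lt_succ_self n))
    rw [h1, hxn]
    exact hufresh ⟨i, hi.trans (Nat.lt_succ_self n)⟩ hi
  rw [hfB, hsum2, hsum1]
  rw [ENNReal.tsum_mul_left.symm]
  exact tsum_congr fun u => hfiber u

lemma condexp_ge (h : IsRWRE P ν X) (g : G) (n : ℕ) :
    ∀ᵐ ω ∂P, (∫ ω', ν 0 g ω' ∂P) * (freshSet X n).indicator (fun _ => (1:ℝ)) ω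
      ≤ (P[Set.indicator {ω' | X (n+1) ω' = X n ω' + g} (fun _ => (1:ℝ)) | natFilt X n]) ω := by
  classical
  set c : ℝ := ∫ ω', ν 0 g ω' ∂P with hc
  have hc0 : 0 ≤ c := integral_nonneg fun ω => h.nonneg 0 g ω
  set A : Set Ω := {ω' | X (n+1) ω' = X n ω' + g} with hA
  have hAmeas : MeasurableSet A := natFilt_le h (n+1) _ (jumpA_meas g n)
  have hFmeas : MeasurableSet (freshSet X n) := natFilt_le h n _ (freshSet_meas n)
  have hint_ind : ∀ {s : Set Ω}, MeasurableSet s →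
      Integrable (s.indicator (fun _ => (1:ℝ))) P := by
    intro s hs
    refine integrable_of_bdd ((measurable_const.indicator hs).aestronglyMeasurable) (C := 1) ?_
    intro ω
    by_cases hω : ω ∈ s
    · rw [Set.indicator_of_mem hω]; simp
    · rw [Set.indicator_of_notMem hω]; simp
  have h1 : (fun ω => c * (freshSet X n).indicator (fun _ => (1:ℝ)) ω)
      =ᵐ[P] P[(A ∩ freshSet X n).indicator (fun _ => (1:ℝ)) | natFilt X n] := by
    refine ae_eq_condExp_of_forall_setIntegral_eq (natFilt_le h n)
      (hint_ind (hAmeas.inter hFmeas)) (fun s hs hsfin => ?_) (fun s hs hsfin => ?_) ?_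
    · exact (integrable_of_bdd ((measurable_const.indicator hFmeas).const_mul
        c).aestronglyMeasurable (C := |c|) (by
          intro ω
          by_cases hω : ω ∈ freshSet X n
          · rw [Set.indicator_of_mem hω]; simp
          · rw [Set.indicator_of_notMem hω]; simp [abs_nonneg])).integrableOn
    · have hsmeas : MeasurableSet s := natFilt_le h n _ hs
      have lhs : ∫ ω in s, c * (freshSet X n).indicator (fun _ => (1:ℝ)) ω ∂P
          = c * (P (freshSet X n ∩ s)).toReal := by
        rw [integral_const_mul]
        congr 1
        rw [setIntegral_indicator hFmeas]
        rw [setIntegral_const]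
        rw [smul_eq_mul, mul_one, Set.inter_comm, measureReal_def]
      have rhs : ∫ ω in s, (A ∩ freshSet X n).indicator (fun _ => (1:ℝ)) ω ∂P
          = (P (A ∩ (freshSet X n ∩ s))).toReal := by
        rw [setIntegral_indicator (hAmeas.inter hFmeas), setIntegral_const, smul_eq_mul, mul_one]
        congr 1
        rw [Set.inter_comm s (A ∩ freshSet X n), Set.inter_assoc]
      rw [lhs, rhs, measure_A_fresh h g n hs]
      rw [ENNReal.toReal_mul, ENNReal.toReal_ofReal hc0]
    · refine StronglyMeasurable.aestronglyMeasurable ?_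
      exact Measurable.stronglyMeasurable
        ((measurable_const.indicator (freshSet_meas n)).const_mul c)
  have h2 : P[(A ∩ freshSet X n).indicator (fun _ => (1:ℝ)) | natFilt X n]
      ≤ᵐ[P] P[A.indicator (fun _ => (1:ℝ)) | natFilt X n] := by
    refine condExp_mono (hint_ind (hAmeas.inter hFmeas)) (hint_ind hAmeas)
      (Filter.Eventually.of_forall fun ω => ?_)
    exact Set.indicator_le_indicator_of_subset Set.inter_subset_left (fun _ => zero_le_one) ω
  filter_upwards [h1, h2] with ω hω1 hω2
  calc c * (freshSet X n).indicator (fun _ => (1:ℝ)) ω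
      = (P[(A ∩ freshSet X n).indicator (fun _ => (1:ℝ)) | natFilt X n]) ω := hω1
    _ ≤ (P[A.indicator (fun _ => (1:ℝ)) | natFilt X n]) ω := hω2

end Aux5
section Aux6
set_option linter.unusedSectionVars false
set_option linter.unusedVariables false

open MeasureTheory ProbabilityTheory Filter Set

variable {G Ω : Type*} [AddCommGroup G] [Countable G]
    [MeasurableSpace G] [MeasurableSingletonClass G] [DecidableEq G] [mΩ : MeasurableSpace Ω]
    {P : Measure Ω} [IsProbabilityMeasure P] {ν : G → G → Ω → ℝ} {X : ℕ → Ω → G}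

lemma c_pos (h : IsRWRE P ν X) {g : G} (hg : g ∈ Ejumps P ν) :
    0 < ∫ ω, ν 0 g ω ∂P := by
  have hint : Integrable (ν 0 g) P :=
    integrable_of_bdd (h.meas_nu 0 g).aestronglyMeasurable (C := 1)
      (fun ω => abs_le.mpr ⟨by linarith [h.nonneg 0 g ω], nu_le_one h 0 g ω⟩)
  rw [integral_pos_iff_support_of_nonneg (fun ω => h.nonneg 0 g ω) hint]
  have hsupp : Function.support (ν 0 g) = {ω | 0 < ν 0 g ω} := by
    ext ω
    simp only [Function.mem_support, Set.mem_setOf_eq]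
    constructor
    · intro hne; exact lt_of_le_of_ne (h.nonneg 0 g ω) (Ne.symm hne)
    · intro hlt; exact ne_of_gt hlt
  rw [hsupp]
  exact hg

lemma fresh_inf_of_range_inf {ω : Ω} (hr : (Set.range fun n => X n ω).Infinite) :
    {n | ω ∈ freshSet X n}.Infinite := by
  have : Infinite ↥(Set.range fun n => X n ω) := hr.to_subtype
  have hmem : ∀ y : ↥(Set.range fun n => X n ω), ∃ n, X n ω = y := by
    rintro ⟨y, n, hn⟩
    exact ⟨n, hn⟩
  set f : ↥(Set.range fun n => X n ω) → ℕ := fun y => Nat.find (hmem y) with hf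
  have hspec : ∀ y, X (f y) ω = y := fun y => Nat.find_spec (hmem y)
  have hinj : Function.Injective f := by
    intro y y' hyy'
    have := hspec y
    rw [hyy', hspec y'] at this
    exact Subtype.ext this.symm
  refine Set.infinite_of_injective_forall_mem hinj fun y => ?_
  intro i hi
  rw [hspec y]
  intro hX
  exact Nat.find_min (hmem y) hi hX

lemma tendsto_sum_atTop {u : ℕ → ℝ} {c : ℝ} (h0 : ∀ k, 0 ≤ u k)
    (hS : {k | c ≤ u k}.Infinite) (hc : 0 < c) :
    Tendsto (fun n => ∑ k ∈ Finset.range n, u k) atTop atTop := by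
  refine tendsto_atTop_atTop_of_monotone (fun a b hab =>
    Finset.sum_le_sum_of_subset_of_nonneg (Finset.range_subset_range.mpr hab)
      fun k _ _ => h0 k) ?_
  intro b
  set m : ℕ := ⌈b / c⌉₊ with hm
  obtain ⟨t, htS, htcard⟩ := hS.exists_subset_card_eq m
  refine ⟨t.sup id + 1, ?_⟩
  have htsub : t ⊆ Finset.range (t.sup id + 1) := by
    intro k hk
    rw [Finset.mem_range, Nat.lt_succ_iff]
    exact Finset.le_sup (f := id) hk
  have h1 : ∑ k ∈ t, u k ≤ ∑ k ∈ Finset.range (t.sup id + 1), u k :=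
    Finset.sum_le_sum_of_subset_of_nonneg htsub fun k _ _ => h0 k
  have h2 : (m : ℝ) * c ≤ ∑ k ∈ t, u k := by
    calc (m : ℝ) * c = ∑ _k ∈ t, c := by rw [Finset.sum_const, htcard, nsmul_eq_mul]
      _ ≤ ∑ k ∈ t, u k := Finset.sum_le_sum fun k hk => htS hk
  have h3 : b ≤ (m : ℝ) * c := by
    rw [← div_le_iff₀ hc]
    exact Nat.le_ceil _
  linarith

lemma exists_jump (h : IsRWRE P ν X)
    (hinf : ∀ᵐ ω ∂P, (Set.range fun n => X n ω).Infinite) {g : G} (hg : g ∈ Ejumps P ν) :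
    ∀ᵐ ω ∂P, ∃ n, X (n+1) ω = X n ω + g := by
  classical
  set c : ℝ := ∫ ω', ν 0 g ω' ∂P with hc
  have hcpos : 0 < c := c_pos h hg
  set ℱ : Filtration ℕ mΩ := ⟨fun n => natFilt X n, natFilt_mono, fun n => natFilt_le h n⟩
    with hℱ
  set s : ℕ → Set Ω := fun n => Nat.rec ∅ (fun k _ => {ω | X (k+1) ω = X k ω + g}) n with hs
  have hsm : ∀ n, MeasurableSet[ℱ n] (s n) := by
    intro n
    match n with
    | 0 => exact @MeasurableSet.empty _ (ℱ 0)
    | (k+1) => exact jumpA_meas g k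
  have hBC := MeasureTheory.ae_mem_limsup_atTop_iff P hsm
  have hcond : ∀ᵐ ω ∂P, ∀ k : ℕ,
      c * (freshSet X k).indicator (fun _ => (1:ℝ)) ω
        ≤ (P[(s (k+1)).indicator (fun _ => (1:ℝ)) | ℱ k]) ω :=
    ae_all_iff.mpr fun k => condexp_ge h g k
  filter_upwards [hBC, hcond, hinf] with ω hω1 hω2 hω3
  have hfresh_inf : {k | ω ∈ freshSet X k}.Infinite := fresh_inf_of_range_inf hω3
  have htend : Tendsto (fun n => ∑ k ∈ Finset.range n,
      (P[(s (k+1)).indicator (fun _ => (1:ℝ)) | ℱ k]) ω) atTop atTop := by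
    refine tendsto_sum_atTop (u := fun k => (P[(s (k+1)).indicator (fun _ => (1:ℝ)) | ℱ k]) ω)
      (fun k => ?_) (hfresh_inf.mono fun k hk => ?_) hcpos
    · refine le_trans ?_ (hω2 k)
      by_cases hωk : ω ∈ freshSet X k
      · rw [Set.indicator_of_mem hωk]
        positivity
      · rw [Set.indicator_of_notMem hωk, mul_zero]
    · have hthis := hω2 k
      rw [Set.indicator_of_mem (show ω ∈ freshSet X k from hk), mul_one] at hthis
      exact hthis
  have hmem : ω ∈ limsup s atTop := hω1.mpr htend
  rw [Filter.mem_limsup_iff_frequently_mem] at hmem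
  obtain ⟨n, hn1, hn⟩ := (Filter.frequently_atTop.mp hmem) 1
  match n, hn1 with
  | (k+1), _ => exact ⟨k, hn⟩

lemma no_jump (h : IsRWRE P ν X) {g : G} (hg : g ∉ Ejumps P ν) :
    ∀ᵐ ω ∂P, ¬ ∃ n, X (n+1) ω = X n ω + g := by
  classical
  have hP0 : P {ω | 0 < ν 0 g ω} = 0 := by
    by_contra hne
    exact hg (pos_iff_ne_zero.mpr hne)
  have hmeas_set : MeasurableSet {π : G → ℝ | 0 < π g} :=
    measurableSet_lt measurable_const (measurable_pi_apply g)
  have hx0 : ∀ x : G, P {ω | 0 < ν x g ω} = 0 := by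
    intro x
    have h1 : {ω | 0 < ν x g ω} = (fun ω (e : G) => ν x e ω) ⁻¹' {π | 0 < π g} := rfl
    have h2 : {ω | 0 < ν 0 g ω} = (fun ω (e : G) => ν 0 e ω) ⁻¹' {π | 0 < π g} := rfl
    rw [h1, ← Measure.map_apply (measurable_nuPi h x) hmeas_set, h.ident_sites x,
      Measure.map_apply (measurable_nuPi h 0) hmeas_set, ← h2, hP0]
  have hae : ∀ x : G, ν x g =ᵐ[P] 0 := by
    intro x
    rw [Filter.EventuallyEq, ae_iff]
    refine measure_mono_null (fun ω hω => ?_) (hx0 x)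
    simp only [Set.mem_setOf_eq] at hω ⊢
    exact lt_of_le_of_ne (h.nonneg x g ω) (Ne.symm hω)
  have hkey : ∀ (n : ℕ) (x : G), P (X n ⁻¹' {x} ∩ {ω | X (n+1) ω = x + g}) = 0 := by
    intro n x
    have hS : MeasurableSet[envSigma ν ⊔ natFilt X n] (X n ⁻¹' {x}) :=
      (le_sup_right : natFilt X n ≤ envSigma ν ⊔ natFilt X n) _ (measSet_natFilt le_rfl {x})
    have hone : Measurable[envSigma ν] (fun _ : Ω => (1:ℝ)) := measurable_const
    have honeb : ∀ ω : Ω, |(1:ℝ)| ≤ 1 := fun ω => by simp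
    have hstep := step_integral h n x g hS (fun ω hω => hω) hone honeb
    have hlhs : ∫ ω, (X n ⁻¹' {x}).indicator (fun _ => (1:ℝ)) ω
        * Set.indicator {ω' | X (n+1) ω' = x + g} (fun _ => (1:ℝ)) ω ∂P
        = (P (X n ⁻¹' {x} ∩ {ω | X (n+1) ω = x + g})).toReal := by
      have hABmeas : MeasurableSet (X n ⁻¹' {x} ∩ {ω | X (n+1) ω = x + g}) :=
        (natFilt_le h n _ (measSet_natFilt le_rfl {x})).inter
          (natFilt_le h (n+1) _ (measSet_natFilt le_rfl {x + g}))
      rw [← integral_indicator_one' hABmeas]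
      refine integral_congr_ae (Filter.Eventually.of_forall fun ω => ?_)
      by_cases h1 : ω ∈ X n ⁻¹' {x} <;> by_cases h2 : ω ∈ {ω' | X (n+1) ω' = x + g} <;>
        simp [Set.indicator_of_mem, Set.indicator_of_notMem, h1, h2, Set.mem_inter_iff]
    have hrhs : ∫ ω, (X n ⁻¹' {x}).indicator (fun _ => (1:ℝ)) ω * ν x g ω ∂P = 0 := by
      rw [← integral_zero Ω ℝ]
      refine integral_congr_ae ?_
      filter_upwards [hae x] with ω hω
      rw [hω]
      simp
    rw [hlhs, hrhs] at hstep
    have := measure_ne_top P (X n ⁻¹' {x} ∩ {ω | X (n+1) ω = x + g})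
    rcases ENNReal.toReal_eq_zero_iff _ |>.mp hstep with h' | h'
    · exact h'
    · exact absurd h' this
  have hnull : P (⋃ (n : ℕ) (x : G), (X n ⁻¹' {x} ∩ {ω | X (n+1) ω = x + g})) = 0 :=
    measure_iUnion_null fun n => measure_iUnion_null fun x => hkey n x
  have hsub : {ω | ∃ n, X (n+1) ω = X n ω + g}
      ⊆ ⋃ (n : ℕ) (x : G), (X n ⁻¹' {x} ∩ {ω | X (n+1) ω = x + g}) := by
    rintro ω ⟨n, hn⟩
    exact Set.mem_iUnion.mpr ⟨n, Set.mem_iUnion.mpr ⟨X n ω, rfl, hn⟩⟩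
  have hzero : P {ω | ∃ n, X (n+1) ω = X n ω + g} = 0 := measure_mono_null hsub hnull
  rw [ae_iff]
  simp only [not_not]
  exact hzero

end Aux6
/-- the set of jumps actually performed by the walk equals a.s. the set
`E = {g | P(ν_g > 0) > 0}` of possible jumps. -/
theorem jumps_eq_Ejumps {G Ω : Type*} [AddCommGroup G] [Countable G]
    [MeasurableSpace G] [MeasurableSingletonClass G] [DecidableEq G] [mΩ : MeasurableSpace Ω]
    (P : Measure Ω) [IsProbabilityMeasure P] (ν : G → G → Ω → ℝ) (X : ℕ → Ω → G)
    (h : IsRWRE P ν X) (hinf : ∀ᵐ ω ∂P, (Set.range fun n => X n ω).Infinite) :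
    ∀ᵐ ω ∂P, {g : G | ∃ n, X (n + 1) ω = X n ω + g} = Ejumps P ν := by
  classical
  have hboth : ∀ᵐ ω ∂P, ∀ g : G,
      (g ∈ Ejumps P ν → ∃ n, X (n + 1) ω = X n ω + g) ∧
      (g ∉ Ejumps P ν → ¬ ∃ n, X (n + 1) ω = X n ω + g) := by
    rw [MeasureTheory.ae_all_iff]
    intro g
    by_cases hg : g ∈ Ejumps P ν
    · filter_upwards [exists_jump h hinf hg] with ω hω
      exact ⟨fun _ => hω, fun hng => absurd hg hng⟩
    · filter_upwards [no_jump h hg] with ω hω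
      exact ⟨fun hgE => absurd hgE hg, fun _ => hω⟩
  filter_upwards [hboth] with ω hω
  ext g
  constructor
  · intro hmem
    by_contra hg
    exact (hω g).2 hg hmem
  · intro hg
    exact (hω g).1 hg
end
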